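/- arXiv:2012.08875 — 7 statements merged into one kernel-verified Lean document; each statement's English description precedes it below -/
import Mathlib

section
/- For all integers k ≥ 3 and m ≥ k+1, there exists a 2-edge-colouring of the complete k-graph K_n^{(k)} on n = k(m+1)+1 vertices whose vertex set admits no partition into two sets V_1 and V_2 such that V_1 is the vertex set of a red tight cycle (possibly degenerate) and V_2 is the vertex set of a blue tight cycle (possibly degenerate). -/
/-!
Fix a vertex `x` and a set `A` of `m + 2` vertices avoiding it, and colour an edge blue when it
meets `A` in exactly one vertex, or contains `x` and meets `A` in exactly two; red otherwise.
Along a tight cycle the number of vertices of `A` in a window of `k` consecutive vertices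
changes by at most one per step. Hence a blue cycle through `x` has exactly `k` vertices, while
in a blue cycle `W` avoiding `x` every window meets `A` once, so `k * |W ∩ A| = |W|`. In a red
cycle `W` the windows avoiding `x` never meet `A` exactly once, so either none of them meets `A`
or each meets it at least twice: `W` misses `A` or `|W ∩ A| ≥ 2 ⌊(|W| - 1) / k⌋`. Counting the
vertices of `V` and of `A` leaves only a red cycle on `k + 1` vertices through `x` meeting `A`
twice, and there the window omitting a vertex outside `A ∪ {x}` is blue.
-/

open Finset

/-- `W` is the vertex set of a (possibly degenerate) tight cycle all of whose edges satisfy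
the predicate `E` (e.g. "is a red edge"): either `|W| < k` (degenerate case), or `W` admits a
cyclic ordering all of whose sets of `k` consecutive vertices satisfy `E`. -/
def IsTightCycleSetOn {V : Type*} [DecidableEq V] (k : ℕ) (E : Finset V → Prop)
    (W : Finset V) : Prop :=
  W.card < k ∨
    ∃ f : ℕ → V,
      (∀ i, f (i + W.card) = f i) ∧
      (∀ i, f i ∈ W) ∧
      (∀ i j, i < W.card → j < W.card → f i = f j → i = j) ∧
      (∀ v ∈ W, ∃ i, f i = v) ∧
      (∀ i, E ((Finset.range k).image (fun j => f (i + j))))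

def windowSum (g : ℕ → ℕ) (L i : ℕ) : ℕ := ∑ j ∈ range L, g (i + j)

section WindowSum

variable (g : ℕ → ℕ)

lemma windowSum_add (a b i : ℕ) :
    windowSum g (a + b) i = windowSum g a i + windowSum g b (i + a) := by
  simp only [windowSum, sum_range_add, add_assoc]

lemma windowSum_succ_left (L i : ℕ) : windowSum g (L + 1) i = g i + windowSum g L (i + 1) := by
  rw [add_comm L, windowSum_add]
  simp [windowSum]

lemma windowSum_succ_add (L i : ℕ) :
    windowSum g L (i + 1) + g i = windowSum g L i + g (i + L) := by
  rw [add_comm, ← windowSum_succ_left, windowSum_add]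
  simp [windowSum]

lemma windowSum_mul (u L i : ℕ) :
    windowSum g (u * L) i = ∑ t ∈ range u, windowSum g L (i + t * L) := by
  induction u with
  | zero => simp [windowSum]
  | succ u ih => rw [add_mul, one_mul, windowSum_add, ih, sum_range_succ]

lemma windowSum_mono {L L' : ℕ} (h : L ≤ L') (i : ℕ) : windowSum g L i ≤ windowSum g L' i := by
  obtain ⟨d, rfl⟩ := Nat.exists_eq_add_of_le h
  rw [windowSum_add]
  exact Nat.le_add_right _ _

lemma le_windowSum {j L : ℕ} (hj : j < L) (i : ℕ) : g (i + j) ≤ windowSum g L i :=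
  single_le_sum (f := fun j => g (i + j)) (fun _ _ => Nat.zero_le _) (mem_range.2 hj)

lemma sum_range_windowSum_comm (M L : ℕ) :
    ∑ i ∈ range M, windowSum g L i = ∑ j ∈ range L, windowSum g M j := by
  simp only [windowSum]
  rw [sum_comm]
  simp only [add_comm]

end WindowSum

lemma forall_eq_zero_or_forall_two_le {c : ℕ → ℕ} (hup : ∀ i, c (i + 1) ≤ c i + 1)
    (hdown : ∀ i, c i ≤ c (i + 1) + 1) {s R : ℕ} (h : ∀ r ≤ R, c (s + r) ≠ 1) :
    (∀ r ≤ R, c (s + r) = 0) ∨ ∀ r ≤ R, 2 ≤ c (s + r) := by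
  induction R with
  | zero =>
    have := h 0 le_rfl
    simp only [Nat.le_zero, forall_eq]
    omega
  | succ R ih =>
    have hR := h (R + 1) le_rfl
    have hup' : c (s + (R + 1)) ≤ c (s + R) + 1 := hup (s + R)
    have hdown' : c (s + R) ≤ c (s + (R + 1)) + 1 := hdown (s + R)
    rcases ih fun r hr => h r (by omega) with h0 | h2
    · left
      intro r hr
      rcases Nat.lt_or_eq_of_le hr with hr | rfl
      · exact h0 r (by omega)
      · have := h0 R le_rfl; omega
    · right
      intro r hr
      rcases Nat.lt_or_eq_of_le hr with hr | rfl
      · exact h2 r (by omega)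
      · have := h2 R le_rfl; omega

lemma windowSum_eq_zero_or_two_mul_div_le {g : ℕ → ℕ} (hg : ∀ i, g i ≤ 1) {L : ℕ}
    (hL : 0 < L) {s R : ℕ} (h : ∀ r ≤ R, windowSum g L (s + r) ≠ 1) :
    windowSum g (R + L) s = 0 ∨ 2 * ((R + L) / L) ≤ windowSum g (R + L) s := by
  have hstep := windowSum_succ_add g L
  rcases forall_eq_zero_or_forall_two_le
    (fun i => by have := hstep i; have := hg (i + L); omega)
    (fun i => by have := hstep i; have := hg i; omega) h with h0 | h2
  · left
    refine sum_eq_zero fun j hj => ?_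
    have hle := le_windowSum g (j := j - min j R) (L := L) (by have := mem_range.1 hj; omega)
      (s + min j R)
    rw [h0 _ (min_le_right _ _), show s + min j R + (j - min j R) = s + j by omega] at hle
    omega
  · right
    set u := (R + L) / L
    have huL : u * L ≤ R + L := Nat.div_mul_le_self _ _
    calc 2 * u = ∑ _t ∈ range u, 2 := by simp [mul_comm]
      _ ≤ ∑ t ∈ range u, windowSum g L (s + t * L) := by
        refine sum_le_sum fun t ht => h2 _ ?_
        have : (t + 1) * L ≤ u * L := Nat.mul_le_mul_right _ (mem_range.1 ht)
        rw [add_mul] at this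
        omega
      _ = windowSum g (u * L) s := (windowSum_mul g u L s).symm
      _ ≤ windowSum g (R + L) s := windowSum_mono g huL s

section CyclicOrdering

variable {V : Type*}

structure IsCyclicOrdering (W : Finset V) (f : ℕ → V) : Prop where
  periodic : Function.Periodic f W.card
  mem : ∀ i, f i ∈ W
  injOn : ∀ i j, i < W.card → j < W.card → f i = f j → i = j
  surj : ∀ v ∈ W, ∃ i, f i = v

namespace IsCyclicOrdering

variable {W : Finset V} {f : ℕ → V} (hf : IsCyclicOrdering W f)
include hf

lemma eq_of_apply_add_eq {i p q : ℕ} (hp : p < W.card) (hq : q < W.card)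
    (h : f (i + p) = f (i + q)) : p = q := by
  have hW : 0 < W.card := by omega
  rw [← hf.periodic.map_mod_nat, ← hf.periodic.map_mod_nat (i + q)] at h
  have hmod : i + p ≡ i + q [MOD W.card] :=
    hf.injOn _ _ (Nat.mod_lt _ hW) (Nat.mod_lt _ hW) h
  have := Nat.ModEq.add_left_cancel' i hmod
  rwa [Nat.ModEq, Nat.mod_eq_of_lt hp, Nat.mod_eq_of_lt hq] at this

lemma exists_lt_apply_eq {v : V} (hv : v ∈ W) : ∃ i < W.card, f i = v := by
  obtain ⟨i, rfl⟩ := hf.surj v hv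
  exact ⟨i % W.card, Nat.mod_lt _ (card_pos.2 ⟨_, hv⟩), hf.periodic.map_mod_nat i⟩

lemma injOn_window {L : ℕ} (hL : L ≤ W.card) (i : ℕ) (s : Finset ℕ) (hs : s ⊆ range L) :
    Set.InjOn (fun j => f (i + j)) s := fun p hp q hq h =>
  hf.eq_of_apply_add_eq (by have := mem_range.1 (hs hp); omega)
    (by have := mem_range.1 (hs hq); omega) h

end IsCyclicOrdering

variable [DecidableEq V]

def window (f : ℕ → V) (L i : ℕ) : Finset V := (range L).image (fun j => f (i + j))

def memIndicator (A : Finset V) (f : ℕ → V) (t : ℕ) : ℕ := if f t ∈ A then 1 else 0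

lemma memIndicator_le_one (A : Finset V) (f : ℕ → V) (t : ℕ) : memIndicator A f t ≤ 1 := by
  unfold memIndicator; split <;> omega

lemma mem_window {f : ℕ → V} {L i : ℕ} {v : V} :
    v ∈ window f L i ↔ ∃ j < L, f (i + j) = v := by
  simp [window]

namespace IsCyclicOrdering

variable {W : Finset V} {f : ℕ → V} (hf : IsCyclicOrdering W f)
include hf

lemma window_subset (L i : ℕ) : window f L i ⊆ W := by
  intro v hv
  obtain ⟨j, -, rfl⟩ := mem_window.1 hv
  exact hf.mem _

lemma card_window_inter {L : ℕ} (hL : L ≤ W.card) (A : Finset V) (i : ℕ) :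
    (window f L i ∩ A).card = windowSum (memIndicator A f) L i := by
  rw [window, ← filter_mem_eq_inter, filter_image,
    card_image_of_injOn (hf.injOn_window hL i _ (filter_subset _ _)), card_filter]
  rfl

lemma window_card_eq (i : ℕ) : window f W.card i = W :=
  eq_of_subset_of_card_le (hf.window_subset _ _) <| by
    rw [window, card_image_of_injOn (hf.injOn_window le_rfl i _ subset_rfl), card_range]

lemma card_inter_eq_windowSum (A : Finset V) (i : ℕ) :
    (W ∩ A).card = windowSum (memIndicator A f) W.card i := by
  rw [← hf.card_window_inter le_rfl, hf.window_card_eq]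

lemma mem_window_succ_of_ne {v : V} (hv : v ∈ W) {i : ℕ} (hne : v ≠ f i) :
    v ∈ window f (W.card - 1) (i + 1) := by
  rw [← hf.window_card_eq i, mem_window] at hv
  obtain ⟨j, hj, rfl⟩ := hv
  obtain ⟨j, rfl⟩ : ∃ j', j = j' + 1 :=
    Nat.exists_eq_succ_of_ne_zero (by rintro rfl; exact hne rfl)
  exact mem_window.2 ⟨j, by omega, by rw [add_comm j, add_assoc]⟩

lemma apply_notMem_window {i p L : ℕ} (hp : 0 < p) (hpL : p + L ≤ W.card) :
    f i ∉ window f L (i + p) := by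
  intro h
  obtain ⟨j, hj, h⟩ := mem_window.1 h
  have := hf.eq_of_apply_add_eq (p := p + j) (q := 0) (by omega) (by omega)
    (by simpa [add_assoc] using h)
  omega

end IsCyclicOrdering

end CyclicOrdering

section Colouring

variable {V : Type*} [DecidableEq V]

abbrev IsBlueEdge (x : V) (A e : Finset V) : Prop := (e ∩ A).card = if x ∈ e then 2 else 1

def redBlueColouring (x : V) (A e : Finset V) : Bool := !decide (IsBlueEdge x A e)

namespace IsCyclicOrdering

variable {W : Finset V} {f : ℕ → V} (hf : IsCyclicOrdering W f) {x : V} {A : Finset V} {k : ℕ}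
include hf

lemma card_eq_of_blue_of_mem (hk : 0 < k) (hkW : k ≤ W.card) (hxA : x ∉ A)
    (hblue : ∀ i, IsBlueEdge x A (window f k i)) (hx : x ∈ W) : W.card = k := by
  by_contra hne
  obtain ⟨i, -, rfl⟩ := hf.exists_lt_apply_eq hx
  have hin : f i ∈ window f k i := mem_window.2 ⟨0, hk, rfl⟩
  have hout : f i ∉ window f k (i + 1) := hf.apply_notMem_window one_pos (by omega)
  have h2 := hblue i
  have h1 := hblue (i + 1)
  unfold IsBlueEdge at h1 h2
  rw [if_pos hin, hf.card_window_inter hkW] at h2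
  rw [if_neg hout, hf.card_window_inter hkW] at h1
  have hstep := windowSum_succ_add (memIndicator A f) k i
  have : memIndicator A f i = 0 := if_neg hxA
  omega

lemma mul_card_inter_eq_of_blue_of_notMem (hkW : k ≤ W.card)
    (hblue : ∀ i, IsBlueEdge x A (window f k i)) (hx : x ∉ W) :
    k * (W ∩ A).card = W.card := by
  have hone : ∀ i, windowSum (memIndicator A f) k i = 1 := fun i => by
    rw [← hf.card_window_inter hkW, hblue i, if_neg fun h => hx (hf.window_subset k i h)]
  calc k * (W ∩ A).card = ∑ j ∈ range k, windowSum (memIndicator A f) W.card j := by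
        simp [← hf.card_inter_eq_windowSum]
    _ = ∑ i ∈ range W.card, windowSum (memIndicator A f) k i :=
        (sum_range_windowSum_comm _ _ _).symm
    _ = W.card := by simp [hone]

lemma card_inter_eq_zero_or_of_red_of_notMem (hk : 0 < k) (hkW : k ≤ W.card)
    (hred : ∀ i, ¬IsBlueEdge x A (window f k i)) (hx : x ∉ W) :
    (W ∩ A).card = 0 ∨ 2 * ((W.card - 1) / k) ≤ (W ∩ A).card := by
  have hne : ∀ r ≤ W.card - k, windowSum (memIndicator A f) k (0 + r) ≠ 1 := fun r _ => by
    have := hred r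
    rwa [IsBlueEdge, if_neg fun h => hx (hf.window_subset k r h), hf.card_window_inter hkW,
      ← zero_add r] at this
  have hrun := windowSum_eq_zero_or_two_mul_div_le (memIndicator_le_one A f) hk hne
  rw [Nat.sub_add_cancel hkW, ← hf.card_inter_eq_windowSum] at hrun
  have := Nat.div_le_div_right (c := k) (Nat.sub_le W.card 1)
  omega

lemma card_inter_eq_zero_or_of_red_of_mem (hk : 0 < k) (hkW : k < W.card) (hxA : x ∉ A)
    (hred : ∀ i, ¬IsBlueEdge x A (window f k i)) (hx : x ∈ W) :
    (W ∩ A).card = 0 ∨ 2 * ((W.card - 1) / k) ≤ (W ∩ A).card := by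
  obtain ⟨i, -, rfl⟩ := hf.exists_lt_apply_eq hx
  have hne : ∀ r ≤ W.card - 1 - k, windowSum (memIndicator A f) k (i + 1 + r) ≠ 1 :=
    fun r _ => by
    have := hred (i + 1 + r)
    rwa [IsBlueEdge, add_assoc, if_neg (hf.apply_notMem_window (by omega) (by omega)),
      hf.card_window_inter hkW.le, ← add_assoc] at this
  have hrun := windowSum_eq_zero_or_two_mul_div_le (memIndicator_le_one A f) hk hne
  have hsplit := windowSum_succ_left (memIndicator A f) (W.card - 1) i
  rw [Nat.sub_add_cancel (by omega : 1 ≤ W.card), ← hf.card_inter_eq_windowSum] at hsplit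
  have : memIndicator A f i = 0 := if_neg hxA
  rw [Nat.sub_add_cancel (by omega : k ≤ W.card - 1)] at hrun
  omega

lemma card_inter_ne_two_of_red (hk : 3 ≤ k) (hW : W.card = k + 1)
    (hred : ∀ i, ¬IsBlueEdge x A (window f k i)) (hx : x ∈ W) : (W ∩ A).card ≠ 2 := by
  intro h2
  obtain ⟨y, hyW, hy⟩ : ∃ y ∈ W, y ∉ insert x (W ∩ A) := by
    refine exists_mem_notMem_of_card_lt_card ?_
    have := card_insert_le x (W ∩ A)
    omega
  obtain ⟨i, -, rfl⟩ := hf.exists_lt_apply_eq hyW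
  simp only [mem_insert, mem_inter, not_or, not_and] at hy
  have hxe : x ∈ window f k (i + 1) := by
    simpa [hW] using hf.mem_window_succ_of_ne hx (Ne.symm hy.1)
  have hsplit := windowSum_succ_left (memIndicator A f) k i
  rw [← hW, ← hf.card_inter_eq_windowSum, ← hf.card_window_inter (by omega)] at hsplit
  have : memIndicator A f i = 0 := if_neg (hy.2 hyW)
  exact hred (i + 1) (by rw [IsBlueEdge, if_pos hxe]; omega)

end IsCyclicOrdering

end Colouring

section TightCycleSets

variable {V : Type*} [DecidableEq V] {k : ℕ} {W : Finset V}

lemma IsTightCycleSetOn.lt_or_exists_isCyclicOrdering {E : Finset V → Prop}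
    (h : IsTightCycleSetOn k E W) :
    W.card < k ∨ ∃ f, IsCyclicOrdering W f ∧ ∀ i, E (window f k i) := by
  rcases h with h | ⟨f, hper, hmem, hinj, hsurj, hE⟩
  exacts [.inl h, .inr ⟨f, ⟨hper, hmem, hinj, hsurj⟩, hE⟩]

variable {x : V} {A : Finset V}

lemma IsTightCycleSetOn.blue_cases (hk : 0 < k) (hxA : x ∉ A)
    (h : IsTightCycleSetOn k (fun e => redBlueColouring x A e = false) W) :
    W.card ≤ k ∨ (x ∉ W ∧ k * (W ∩ A).card = W.card) := by
  rcases h.lt_or_exists_isCyclicOrdering with h | ⟨f, hf, hblue⟩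
  · exact .inl h.le
  simp only [redBlueColouring, Bool.not_eq_false', decide_eq_true_eq] at hblue
  by_cases hkW : k ≤ W.card
  · by_cases hx : x ∈ W
    · exact .inl (hf.card_eq_of_blue_of_mem hk hkW hxA hblue hx).le
    · exact .inr ⟨hx, hf.mul_card_inter_eq_of_blue_of_notMem hkW hblue hx⟩
  · exact .inl (not_le.1 hkW).le

lemma IsTightCycleSetOn.red_cases (hk : 3 ≤ k) (hxA : x ∉ A)
    (h : IsTightCycleSetOn k (fun e => redBlueColouring x A e = true) W) :
    W.card < k ∨ ((W ∩ A).card = 0 ∨ 2 * ((W.card - 1) / k) ≤ (W ∩ A).card) ∧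
      (x ∈ W → W.card = k + 1 → (W ∩ A).card ≠ 2) := by
  rcases h.lt_or_exists_isCyclicOrdering with h | ⟨f, hf, hred⟩
  · exact .inl h
  rw [or_iff_not_imp_left, not_lt]
  intro hkW
  simp only [redBlueColouring, Bool.not_eq_true', decide_eq_false_iff_not] at hred
  refine ⟨?_, fun hx hW => hf.card_inter_ne_two_of_red hk hW hred hx⟩
  by_cases hx : x ∈ W
  · rcases hkW.eq_or_lt with hW | hW
    · simp [← hW, Nat.div_eq_of_lt (show k - 1 < k by omega)]
    · exact hf.card_inter_eq_zero_or_of_red_of_mem (by omega) hW hxA hred hx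
  · exact hf.card_inter_eq_zero_or_of_red_of_notMem (by omega) hkW hred hx

end TightCycleSets

theorem not_exists_red_blue_tightCycle_partition {V : Type*} [Fintype V] [DecidableEq V]
    {k m : ℕ} (hk : 3 ≤ k) (hm : k + 1 ≤ m) {x : V} {A : Finset V} (hxA : x ∉ A)
    (hA : A.card = m + 2) (hV : Fintype.card V = k * (m + 1) + 1) :
    ¬ ∃ V1 V2 : Finset V, Disjoint V1 V2 ∧ V1 ∪ V2 = univ ∧
      IsTightCycleSetOn k (fun e => redBlueColouring x A e = true) V1 ∧
      IsTightCycleSetOn k (fun e => redBlueColouring x A e = false) V2 := by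
  rintro ⟨V1, V2, hdisj, hcover, hred, hblue⟩
  have hcard : V1.card + V2.card = k * (m + 1) + 1 := by
    rw [← card_union_of_disjoint hdisj, hcover, card_univ, hV]
  have hcardA : (V1 ∩ A).card + (V2 ∩ A).card = m + 2 := by
    rw [← card_union_of_disjoint (hdisj.mono inter_subset_left inter_subset_left),
      ← union_inter_distrib_right, hcover, univ_inter, hA]
  have hA1 : (V1 ∩ A).card ≤ V1.card := card_le_card inter_subset_left
  have hA2 : (V2 ∩ A).card ≤ V2.card := card_le_card inter_subset_left
  have hkm : k * (m + 1) = k * m + k := by ring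
  have hk_le : k ≤ k * m := Nat.le_mul_of_pos_right k (by omega)
  have hmk : m * k = k * m := mul_comm m k
  rcases hblue.blue_cases (by omega) hxA with hsmall | ⟨hx2, hkA2⟩
  · rcases hred.red_cases hk hxA with h | ⟨h0 | h2, -⟩
    · omega
    · omega
    · have : m ≤ (V1.card - 1) / k := (Nat.le_div_iff_mul_le (by omega)).2 (by omega)
      omega
  · have hx1 : x ∈ V1 := (mem_union.1 (hcover ▸ mem_univ x)).resolve_right hx2
    have hA1x : (V1 ∩ A).card < V1.card :=
      card_lt_card ⟨inter_subset_left, fun h => hxA (mem_inter.1 (h hx1)).2⟩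
    obtain ⟨d, hd⟩ : ∃ d, (V2 ∩ A).card + d = m + 1 := by
      refine Nat.le.dest (Nat.le_of_mul_le_mul_left ?_ (show 0 < k by omega))
      omega
    have hV1 : V1.card = k * d + 1 := by
      have : k * (m + 1) = k * (V2 ∩ A).card + k * d := by rw [← hd, mul_add]
      omega
    have hd0 : d ≠ 0 := by
      rintro rfl
      omega
    have hkd : k ≤ k * d := Nat.le_mul_of_pos_right k (Nat.pos_of_ne_zero hd0)
    have hdiv : (V1.card - 1) / k = d := by
      rw [hV1, Nat.add_sub_cancel, Nat.mul_div_cancel_left _ (by omega)]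
    rcases hred.red_cases hk hxA with h | ⟨h0 | h2, hne⟩
    · omega
    · omega
    · obtain rfl : d = 1 := by omega
      exact hne hx1 (by omega) (by omega)

/-- For all `k ≥ 3` and `m ≥ k + 1`, there is a 2-edge-colouring (`true` = red, `false` = blue)
of the complete `k`-graph on `k(m+1)+1` vertices whose vertex set admits no partition into the
vertex set of a red tight cycle and the vertex set of a blue tight cycle
(possibly degenerate). -/
theorem stmt0 (k m : ℕ) (hk : 3 ≤ k) (hm : k + 1 ≤ m) :
    ∃ c : Finset (Fin (k * (m + 1) + 1)) → Bool,
      ¬ ∃ V1 V2 : Finset (Fin (k * (m + 1) + 1)),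
          Disjoint V1 V2 ∧ V1 ∪ V2 = Finset.univ ∧
          IsTightCycleSetOn k (fun e => c e = true) V1 ∧
          IsTightCycleSetOn k (fun e => c e = false) V2 := by
  obtain ⟨A, hA0, hA⟩ := exists_subset_card_eq (s := univ.erase (0 : Fin (k * (m + 1) + 1)))
    (n := m + 2) <| by
      rw [card_erase_of_mem (mem_univ _), card_univ, Fintype.card_fin, Nat.add_sub_cancel]
      nlinarith
  exact ⟨redBlueColouring 0 A, not_exists_red_blue_tightCycle_partition hk hm
    (fun h => (mem_erase.1 (hA0 h)).1 rfl) hA (Fintype.card_fin _)⟩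
end

section
/- Let k ≥ 2, let 0 ≤ α ≤ 1 and μ > 1/2, and let H be a (μ, α)-dense k-graph on n vertices. Then H is tightly connected, i.e., every two edges of H are tightly connected in H. -/
open Finset

/-- `degOn k H S W` is `d_H(S, W)`: the number of `(k - |S|)`-element subsets `e` of `W`
with `e ∪ S` an edge of the `k`-graph `H`. -/
def degOn {V : Type*} [DecidableEq V] (k : ℕ) (H : Finset (Finset V)) (S W : Finset V) : ℕ :=
  ((W.powersetCard (k - S.card)).filter (fun e => e ∪ S ∈ H)).card

/-- `degT k H S` is `d_H(S) = d_H(S, V)`. -/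
def degT {V : Type*} [Fintype V] [DecidableEq V] (k : ℕ) (H : Finset (Finset V))
    (S : Finset V) : ℕ :=
  degOn k H S Finset.univ

/-- A `k`-graph `H` on the vertex set `V` is `(μ, α)`-dense. -/
def IsDense {V : Type*} [Fintype V] [DecidableEq V] (k : ℕ) (H : Finset (Finset V))
    (μ α : ℝ) : Prop :=
  ∀ i : ℕ, 1 ≤ i → i ≤ k - 1 →
    (({S : Finset V | S.card = i ∧
        (degT k H S : ℝ) < μ * ((Fintype.card V).choose (k - i))}.ncard : ℝ)
      ≤ α * ((Fintype.card V).choose i)) ∧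
    ∀ S : Finset V, S.card = i →
      (degT k H S : ℝ) < μ * ((Fintype.card V).choose (k - i)) → degT k H S = 0

/-- Two edges `f, f'` of a `k`-graph `Hc` are tightly connected: there is a walk of edges,
consecutive ones sharing `k - 1` vertices. -/
def TightConn {V : Type*} [DecidableEq V] (k : ℕ) (Hc : Finset (Finset V)) (f f' : Finset V) : Prop :=
  ∃ (t : ℕ) (e : ℕ → Finset V), e 0 = f ∧ e t = f' ∧ (∀ i ≤ t, e i ∈ Hc) ∧
    ∀ i < t, ((e i) ∩ (e (i + 1))).card = k - 1

/-- `C` is a tightly connected subgraph of the `k`-graph `Hc`. -/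
def IsTCSub {V : Type*} [DecidableEq V] (k : ℕ) (Hc C : Finset (Finset V)) : Prop :=
  C ⊆ Hc ∧ ∀ f ∈ C, ∀ f' ∈ C, TightConn k Hc f f'

/-- `C` is a tight component (a maximal tightly connected subgraph) of the `k`-graph `Hc`. -/
def IsTightComponent {V : Type*} [DecidableEq V] (k : ℕ) (Hc C : Finset (Finset V)) : Prop :=
  IsTCSub k Hc C ∧ ∀ C' : Finset (Finset V), IsTCSub k Hc C' → C ⊆ C' → C' = C

/-- The shadow of `H` consisting of all `r`-element sets contained in some edge of `H`. -/
def shadowTo {V : Type*} [Fintype V] [DecidableEq V] (r : ℕ) (H : Finset (Finset V)) :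
    Finset (Finset V) :=
  ((Finset.univ : Finset V).powersetCard r).filter (fun e => ∃ f ∈ H, e ⊆ f)

/-- An `ε`-blueprint for a 2-edge-coloured `k`-graph `H` (with colouring `cH`, `true` = red):
a 2-edge-coloured `(k-2)`-graph together with the assignment `comp` of monochromatic tight
components, satisfying (BP1) and (BP2). -/
structure Blueprint (k : ℕ) {V : Type*} [Fintype V] [DecidableEq V]
    (H : Finset (Finset V)) (cH : Finset V → Bool) (ε : ℝ) where
  verts : Finset V
  edges : Finset (Finset V)
  col : Finset V → Bool
  comp : Finset V → Finset (Finset V)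
  edges_card : ∀ e ∈ edges, e.card = k - 2
  edges_sub : ∀ e ∈ edges, e ⊆ verts
  comp_is : ∀ e ∈ edges, IsTightComponent k (H.filter (fun f => cH f = col e)) (comp e)
  comp_deg : ∀ e ∈ edges,
    (1 - ε) * (Fintype.card V : ℝ) ≤ (degT (k - 1) (shadowTo (k - 1) (comp e)) e : ℝ)
  comp_agree : ∀ e ∈ edges, ∀ e' ∈ edges, col e = col e' → (e ∩ e').card = k - 3 →
    comp e = comp e'

/-- For a subset `G'` of the edges of a blueprint `G`, the `k`-graph `(G')⁺`: all edges of
`⋃_{e ∈ G'} H(e)` containing some edge of `G'`. -/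
def Blueprint.plus {k : ℕ} {V : Type*} [Fintype V] [DecidableEq V]
    {H : Finset (Finset V)} {cH : Finset V → Bool} {ε : ℝ}
    (G : Blueprint k H cH ε) (G' : Finset (Finset V)) : Finset (Finset V) :=
  (G'.biUnion (fun e => G.comp e)).filter (fun f => ∃ e ∈ G', e ⊆ f)

/-- `M` is a matching: a set of pairwise disjoint edges. -/
def IsMatching {V : Type*} [DecidableEq V] (M : Finset (Finset V)) : Prop :=
  ∀ e ∈ M, ∀ f ∈ M, e ≠ f → Disjoint e f

/-- `M` is a tightly connected matching in the `k`-graph `Hc`. -/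
def IsTCMatching {V : Type*} [DecidableEq V] (k : ℕ) (Hc M : Finset (Finset V)) : Prop :=
  M ⊆ Hc ∧ IsMatching M ∧ ∀ e ∈ M, ∀ f ∈ M, TightConn k Hc e f

/-!
By density, every `(k-1)`-set lying in an edge of `H` has nonzero degree, hence degree at least
`μ n > n / 2`; so any two such sets `S, T` have a common neighbour `v`. Given edges `f, g`, extend
`f ∩ g` to `(k-1)`-sets `S ⊆ f` and `T ⊆ g`: the edges `S ∪ {v}` and `T ∪ {v}` are equal or
tightly adjacent to `f` and `g` respectively and share more than `|f ∩ g|` vertices, so induction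
on `k - |f ∩ g|` connects `f` to `g`.
-/

def neighbors {V : Type*} [Fintype V] [DecidableEq V] (H : Finset (Finset V)) (S : Finset V) :
    Finset V :=
  {v | insert v S ∈ H}

namespace TightConn

variable {V : Type*} [DecidableEq V] {k : ℕ} {H : Finset (Finset V)} {f g h : Finset V}

theorem refl (hf : f ∈ H) : TightConn k H f f :=
  ⟨0, fun _ => f, rfl, rfl, fun _ _ => hf, fun _ hi => absurd hi (Nat.not_lt_zero _)⟩

theorem of_card_inter_eq (hf : f ∈ H) (hg : g ∈ H) (hfg : #(f ∩ g) = k - 1) :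
    TightConn k H f g := by
  refine ⟨1, fun i => if i = 0 then f else g, rfl, rfl, ?_, ?_⟩
  · intro i _
    dsimp only
    split <;> assumption
  · intro i hi
    obtain rfl : i = 0 := by omega
    simpa using hfg

theorem trans (h₁ : TightConn k H f g) (h₂ : TightConn k H g h) : TightConn k H f h := by
  obtain ⟨t, e, he0, het, hmem, hstep⟩ := h₁
  obtain ⟨t', e', he0', het', hmem', hstep'⟩ := h₂
  have hjoin : e' 0 = e t := he0'.trans het.symm
  refine ⟨t + t', fun i => if i < t then e i else e' (i - t), ?_, ?_, ?_, ?_⟩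
  · rcases Nat.eq_zero_or_pos t with rfl | ht
    · simpa [hjoin] using he0
    · simpa [ht] using he0
  · simpa using het'
  · intro i hi
    dsimp only
    split
    · exact hmem i (by omega)
    · exact hmem' (i - t) (by omega)
  · intro i hi
    dsimp only
    by_cases hit : i < t
    · rw [if_pos hit]
      by_cases hit' : i + 1 < t
      · rw [if_pos hit']
        exact hstep i hit
      · obtain rfl : t = i + 1 := by omega
        rw [if_neg hit', Nat.sub_self, hjoin]
        exact hstep i hit
    · rw [if_neg hit, if_neg (by omega), show i + 1 - t = i - t + 1 by omega]
      exact hstep' (i - t) (by omega)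

theorem of_le_card_inter (hcard : ∀ e ∈ H, #e = k) (hf : f ∈ H) (hg : g ∈ H)
    (hfg : k - 1 ≤ #(f ∩ g)) : TightConn k H f g := by
  by_cases heq : #(f ∩ g) = k - 1
  · exact of_card_inter_eq hf hg heq
  have hf_sub : f ⊆ g := by
    have hinter : f ∩ g = f :=
      eq_of_subset_of_card_le inter_subset_left (by rw [hcard f hf]; omega)
    exact hinter ▸ inter_subset_right
  obtain rfl : f = g :=
    eq_of_subset_of_card_le hf_sub (by rw [hcard f hf, hcard g hg])
  exact refl hf

end TightConn

section Neighbors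

variable {V : Type*} [Fintype V] [DecidableEq V] {k : ℕ} {H : Finset (Finset V)}

theorem degT_eq_card_neighbors {S : Finset V} (hk : 1 ≤ k) (hS : #S = k - 1) :
    degT k H S = #(neighbors H S) := by
  rw [degT, degOn, hS, show k - (k - 1) = 1 by omega, powersetCard_one, filter_map, card_map]
  rfl

theorem degT_ne_zero_of_subset_mem (hcard : ∀ e ∈ H, #e = k) {S g : Finset V} (hg : g ∈ H)
    (hSg : S ⊆ g) : degT k H S ≠ 0 := by
  refine card_ne_zero_of_mem (a := g \ S) ?_
  rw [mem_filter, mem_powersetCard, card_sdiff_of_subset hSg, hcard g hg,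
    sdiff_union_of_subset hSg]
  exact ⟨⟨subset_univ _, rfl⟩, hg⟩

theorem IsDense.mul_card_le_card_neighbors {μ α : ℝ} (hk : 2 ≤ k)
    (hcard : ∀ e ∈ H, #e = k) (hdense : IsDense k H μ α) {S g : Finset V} (hg : g ∈ H)
    (hSg : S ⊆ g) (hS : #S = k - 1) :
    μ * Fintype.card V ≤ #(neighbors H S) := by
  have hlarge := mt ((hdense (k - 1) (by omega) le_rfl).2 S hS)
    (degT_ne_zero_of_subset_mem hcard hg hSg)
  rw [not_lt, degT_eq_card_neighbors (by omega) hS, show k - (k - 1) = 1 by omega,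
    Nat.choose_one_right] at hlarge
  exact hlarge

theorem exists_mem_neighbors_inter {S T : Finset V}
    (hST : Fintype.card V < #(neighbors H S) + #(neighbors H T)) :
    ∃ v, insert v S ∈ H ∧ insert v T ∈ H := by
  obtain ⟨v, hv⟩ := inter_nonempty_of_card_lt_card_add_card (subset_univ (neighbors H S))
    (subset_univ (neighbors H T)) (by rwa [card_univ])
  simp only [neighbors, mem_inter, mem_filter, mem_univ, true_and] at hv
  exact ⟨v, hv⟩

theorem exists_tightConn_card_inter_lt
    (hcard : ∀ e ∈ H, #e = k)
    (hnbr : ∀ g ∈ H, ∀ S ⊆ g, #S = k - 1 → Fintype.card V < 2 * #(neighbors H S))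
    {f g : Finset V} (hf : f ∈ H) (hg : g ∈ H) (hfg : #(f ∩ g) < k) :
    ∃ f₁ ∈ H, ∃ g₁ ∈ H, TightConn k H f f₁ ∧ TightConn k H g₁ g ∧
      #(f ∩ g) < #(f₁ ∩ g₁) := by
  obtain ⟨S, hfgS, hSf, hS⟩ := exists_subsuperset_card_eq (inter_subset_left : f ∩ g ⊆ f)
    (by omega : #(f ∩ g) ≤ k - 1) (by rw [hcard f hf]; omega)
  obtain ⟨T, hfgT, hTg, hT⟩ := exists_subsuperset_card_eq (inter_subset_right : f ∩ g ⊆ g)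
    (by omega : #(f ∩ g) ≤ k - 1) (by rw [hcard g hg]; omega)
  obtain ⟨v, hvS, hvT⟩ := exists_mem_neighbors_inter (H := H) (S := S) (T := T)
    (by have := hnbr f hf S hSf hS; have := hnbr g hg T hTg hT; omega)
  have hv : v ∉ f ∩ g := fun hv => by
    have := hcard _ hvS
    rw [insert_eq_of_mem (hfgS hv)] at this
    omega
  refine ⟨insert v S, hvS, insert v T, hvT, ?_, ?_, ?_⟩
  · refine TightConn.of_le_card_inter hcard hf hvS ?_
    exact hS ▸ card_le_card (subset_inter hSf (subset_insert v S))
  · refine TightConn.of_le_card_inter hcard hvT hg ?_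
    exact hT ▸ card_le_card (subset_inter (subset_insert v T) hTg)
  · calc #(f ∩ g) < #(insert v (f ∩ g)) := by rw [card_insert_of_notMem hv]; omega
      _ ≤ #(insert v S ∩ insert v T) := by
        rw [← insert_inter_distrib]
        exact card_le_card (insert_subset_insert v (subset_inter hfgS hfgT))

theorem tightConn_of_two_mul_card_neighbors_gt (hcard : ∀ e ∈ H, #e = k)
    (hnbr : ∀ g ∈ H, ∀ S ⊆ g, #S = k - 1 → Fintype.card V < 2 * #(neighbors H S))
    {f g : Finset V} (hf : f ∈ H) (hg : g ∈ H) : TightConn k H f g := by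
  induction hd : k - #(f ∩ g) using Nat.strong_induction_on generalizing f g with
  | _ d ih =>
    by_cases hfg : k ≤ #(f ∩ g)
    · exact TightConn.of_le_card_inter hcard hf hg (by omega)
    obtain ⟨f₁, hf₁, g₁, hg₁, hff₁, hg₁g, hlt⟩ :=
      exists_tightConn_card_inter_lt hcard hnbr hf hg (by omega)
    have hf₁g₁ : TightConn k H f₁ g₁ := ih _ (by
      have := card_le_card (inter_subset_left : f₁ ∩ g₁ ⊆ f₁)
      rw [hcard f₁ hf₁] at this
      omega) hf₁ hg₁ rfl
    exact (hff₁.trans hf₁g₁).trans hg₁g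

end Neighbors

theorem stmt4_general (k n : ℕ) (hk : 2 ≤ k) (α μ : ℝ)
    (hμ : 1 / 2 < μ)
    (H : Finset (Finset (Fin n))) (hcard : ∀ e ∈ H, e.card = k)
    (hdense : IsDense k H μ α) :
    ∀ f ∈ H, ∀ f' ∈ H, TightConn k H f f' := by
  intro f hf f' hf'
  refine tightConn_of_two_mul_card_neighbors_gt hcard ?_ hf hf'
  intro g hg S hSg hS
  have hn : (0 : ℝ) < n := by
    have := card_le_univ g
    rw [hcard g hg, Fintype.card_fin] at this
    exact_mod_cast (by omega : 0 < n)
  have hlarge := hdense.mul_card_le_card_neighbors hk hcard hg hSg hS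
  rw [Fintype.card_fin] at hlarge ⊢
  exact_mod_cast (by nlinarith : (n : ℝ) < 2 * #(neighbors H S))

/-- Let `k ≥ 2`, `0 ≤ α ≤ 1`, `μ > 1/2` and let `H` be a `(μ, α)`-dense `k`-graph on `n`
vertices. Then `H` is tightly connected: every two edges of `H` are tightly connected. -/
theorem stmt4 (k n : ℕ) (hk : 2 ≤ k) (α μ : ℝ)
    (hα0 : 0 ≤ α) (hα1 : α ≤ 1) (hμ : 1 / 2 < μ)
    (H : Finset (Finset (Fin n))) (hcard : ∀ e ∈ H, e.card = k)
    (hdense : IsDense k H μ α) :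
    ∀ f ∈ H, ∀ f' ∈ H, TightConn k H f f' :=
  stmt4_general k n hk α μ hμ H hcard hdense
end

section
/- For every integer k ≥ 2 there exists α_0 > 0 such that for every 0 < α ≤ α_0 there exists n_0 such that for all n ≥ n_0 the following holds: every k-graph H on n vertices with |H| ≥ (1−α)·binom(n,k) has a spanning subgraph H' (with V(H') = V(H)) that is (1 − 2α^{1/(4k²)}, 2α^{1/(4k²)})-dense. -/
open Finset

/-!
Let `M` be the family of `k`-sets missing from `H` and `β = α ^ (1 / (4k²))`. Call `U` sparse if
at most a `β ^ (2(k - |U|))` fraction of the `k`-sets through `U` lie in `M`, and keep in `H'`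
the edges of `H` all of whose subsets are sparse. A set with a non-sparse subset then has degree
`0` in `H'`. Averaging the missing fraction over the `j`-supersets of `U` returns that of `U`, so
by Markov's inequality a sparse `U` has at most a `β ^ (2(j - |U|))` fraction of non-sparse
`j`-supersets. Summing over the possible non-sparse subsets, all but `O(β²)` of the `i`-sets
are hereditarily sparse, and a hereditarily sparse `S` loses only `O(β²) C(n - |S|, k - |S|)` of
its `k`-supersets to missing or discarded edges; for `n ≫ k² / β` this is within `2β` of
`C(n, k - |S|)`.
-/

namespace Nat

-- `C(N, r) - C(N - c, r) ≤ c C(N - 1, r - 1) = c r C(N, r) / N`, multiplied through by `N`.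
theorem mul_choose_le_mul_choose_sub_add (N c r : ℕ) :
    N * N.choose r ≤ N * (N - c).choose r + c * r * N.choose r := by
  induction c with
  | zero => simp
  | succ c ih =>
    suffices N * (N - c).choose r ≤ N * (N - (c + 1)).choose r + r * N.choose r by
      rw [add_mul, add_mul, one_mul]; omega
    rcases r with _ | r
    · simp
    rcases Nat.eq_zero_or_pos (N - c) with h | h
    · simp [h]
    obtain ⟨N', rfl⟩ : ∃ N', N = N' + 1 := ⟨N - 1, by omega⟩
    have hpascal : (N' + 1 - c).choose (r + 1) =
        (N' + 1 - (c + 1)).choose r + (N' + 1 - (c + 1)).choose (r + 1) := by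
      rw [show N' + 1 - c = N' + 1 - (c + 1) + 1 by omega, Nat.choose_succ_succ']
    have hpred : (N' + 1) * (N' + 1 - (c + 1)).choose r ≤ (r + 1) * (N' + 1).choose (r + 1) :=
      calc (N' + 1) * (N' + 1 - (c + 1)).choose r ≤ (N' + 1) * N'.choose r :=
            Nat.mul_le_mul_left _ (Nat.choose_le_choose _ (by omega))
        _ = (r + 1) * (N' + 1).choose (r + 1) := by rw [add_one_mul_choose_eq, mul_comm]
    rw [hpascal, mul_add]
    omega

theorem choose_le_two_mul_choose_sub {N c r : ℕ} (h : 2 * (c * r) ≤ N) :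
    N.choose r ≤ 2 * (N - c).choose r := by
  rcases Nat.eq_zero_or_pos N with rfl | hN
  · rw [Nat.zero_sub]; omega
  have := mul_choose_le_mul_choose_sub_add N c r
  refine le_of_mul_le_mul_left ?_ hN
  nlinarith

end Nat

theorem one_sub_mul_choose_le_choose_sub {N c r : ℕ} {x : ℝ} (hN : 0 < N)
    (hx : (c * r : ℝ) ≤ x * N) : (1 - x) * N.choose r ≤ ((N - c).choose r : ℕ) := by
  have key : (N : ℝ) * N.choose r ≤ N * (N - c).choose r + c * r * N.choose r := by
    exact_mod_cast Nat.mul_choose_le_mul_choose_sub_add N c r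
  have hN' : (0 : ℝ) < N := by exact_mod_cast hN
  refine le_of_mul_le_mul_left ?_ hN'
  nlinarith [mul_le_mul_of_nonneg_right hx (Nat.cast_nonneg (α := ℝ) (N.choose r))]

section Counting

variable {V : Type*} [DecidableEq V]

theorem degT_eq_card_filter_superset [Fintype V] {k : ℕ} {H : Finset (Finset V)}
    (hH : ∀ e ∈ H, #e = k) {S : Finset V} (hS : #S ≤ k) :
    degT k H S = #{f ∈ H | S ⊆ f} := by
  refine card_bij' (fun e _ => e ∪ S) (fun f _ => f \ S) ?_ ?_ ?_ ?_
  · intro e he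
    simp only [mem_filter, mem_powersetCard] at he ⊢
    exact ⟨he.2, subset_union_right⟩
  · intro f hf
    simp only [mem_filter, mem_powersetCard] at hf ⊢
    rw [card_sdiff_of_subset hf.2, hH f hf.1, sdiff_union_of_subset hf.2]
    exact ⟨⟨subset_univ _, rfl⟩, hf.1⟩
  · intro e he
    simp only [mem_filter, mem_powersetCard] at he
    have hdisj : Disjoint e S := by
      have := card_union_add_card_inter e S
      rw [hH _ he.2] at this
      exact disjoint_iff_inter_eq_empty.2 (card_eq_zero.1 (by omega))
    exact union_sdiff_cancel_right hdisj
  · intro f hf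
    exact sdiff_union_of_subset (mem_filter.1 hf).2

theorem sum_card_filter_superset [Fintype V] {k : ℕ} {M : Finset (Finset V)}
    (hM : ∀ e ∈ M, #e = k) {U : Finset V} {j : ℕ} (hUj : #U ≤ j) :
    ∑ T ∈ {T ∈ univ.powersetCard j | U ⊆ T}, #{f ∈ M | T ⊆ f} =
      (k - #U).choose (j - #U) * #{f ∈ M | U ⊆ f} := by
  refine (sum_card_bipartiteAbove_eq_sum_card_bipartiteBelow
    (· ⊆ · : Finset V → Finset V → Prop)).trans ?_
  rw [card_filter, mul_sum]
  refine sum_congr rfl fun f hf => ?_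
  split_ifs with hUf
  · rw [mul_one, ← hM f hf, ← card_filter_powersetCard_subset U f j hUf hUj]
    congr 1
    ext T
    simp only [bipartiteBelow, mem_filter, mem_powersetCard, subset_univ, true_and]
    tauto
  · rw [mul_zero, card_eq_zero, bipartiteBelow, filter_eq_empty_iff]
    exact fun T hT hTf => hUf ((mem_filter.1 hT).2.trans hTf)

end Counting

section Sparse

open scoped Classical

variable {V : Type*} [Fintype V] [DecidableEq V] {k : ℕ} {M : Finset (Finset V)} {β : ℝ}

/-- The exponent drops by two with every vertex added to `U`, so that by Markov's inequality a
sparse set has at most a `β ^ (2 * d)` fraction of non-sparse supersets with `d` more vertices. -/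
def IsSparse (k : ℕ) (M : Finset (Finset V)) (β : ℝ) (U : Finset V) : Prop :=
  (#{f ∈ M | U ⊆ f} : ℝ) ≤ β ^ (2 * (k - #U)) * (Fintype.card V - #U).choose (k - #U)

def IsHereditarilySparse (k : ℕ) (M : Finset (Finset V)) (β : ℝ) (S : Finset V) : Prop :=
  ∀ U ⊆ S, IsSparse k M β U

theorem IsHereditarilySparse.mono {S F : Finset V} (hF : IsHereditarilySparse k M β F)
    (hSF : S ⊆ F) : IsHereditarilySparse k M β S :=
  fun U hU => hF U (hU.trans hSF)

theorem card_superset_not_isSparse_le (hM : ∀ e ∈ M, #e = k) (hβ : 0 < β)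
    (hkn : k ≤ Fintype.card V) {U : Finset V} (hU : IsSparse k M β U) {j : ℕ} (hUj : #U ≤ j)
    (hjk : j ≤ k) :
    (#{T ∈ univ.powersetCard j | U ⊆ T ∧ ¬IsSparse k M β T} : ℝ) ≤
      β ^ (2 * (j - #U)) * (Fintype.card V - #U).choose (j - #U) := by
  set n := Fintype.card V
  set u := #U
  set A : Finset (Finset V) := {T ∈ univ.powersetCard j | U ⊆ T}
  set threshold : ℝ := β ^ (2 * (k - j)) * (n - j).choose (k - j)
  have hthreshold : 0 < threshold := by
    have : 0 < (n - j).choose (k - j) := Nat.choose_pos (by omega)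
    positivity
  have hmarkov : (#{T ∈ A | ¬IsSparse k M β T} : ℝ) * threshold ≤
      ∑ T ∈ A, (#{f ∈ M | T ⊆ f} : ℝ) := by
    calc (#{T ∈ A | ¬IsSparse k M β T} : ℝ) * threshold
        ≤ ∑ T ∈ {T ∈ A | ¬IsSparse k M β T}, (#{f ∈ M | T ⊆ f} : ℝ) := by
          rw [← nsmul_eq_mul]
          refine card_nsmul_le_sum _ _ _ fun T hT => ?_
          obtain ⟨hTA, hT⟩ := mem_filter.1 hT
          have hTj : #T = j := (mem_powersetCard.1 (mem_filter.1 hTA).1).2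
          rw [IsSparse, hTj] at hT
          exact (not_le.1 hT).le
      _ ≤ ∑ T ∈ A, (#{f ∈ M | T ⊆ f} : ℝ) :=
          sum_le_sum_of_subset_of_nonneg (filter_subset _ _) fun _ _ _ => Nat.cast_nonneg _
  have hdouble : ∑ T ∈ A, (#{f ∈ M | T ⊆ f} : ℝ) ≤
      β ^ (2 * (j - u)) * (n - u).choose (j - u) * threshold := by
    have hcount := sum_card_filter_superset hM hUj
    have hchoose : (n - u).choose (k - u) * (k - u).choose (j - u) =
        (n - u).choose (j - u) * (n - j).choose (k - j) := by
      rw [Nat.choose_mul (by omega), show n - u - (j - u) = n - j by omega,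
        show k - u - (j - u) = k - j by omega]
    have hpow : β ^ (2 * (k - u)) = β ^ (2 * (j - u)) * β ^ (2 * (k - j)) := by
      rw [← pow_add]; congr 1; omega
    calc ∑ T ∈ A, (#{f ∈ M | T ⊆ f} : ℝ) = (k - u).choose (j - u) * (#{f ∈ M | U ⊆ f} : ℝ) := by
          exact_mod_cast hcount
      _ ≤ (k - u).choose (j - u) * (β ^ (2 * (k - u)) * (n - u).choose (k - u)) :=
          mul_le_mul_of_nonneg_left hU (Nat.cast_nonneg _)
      _ = β ^ (2 * (j - u)) * (n - u).choose (j - u) * threshold := by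
          rw [hpow]
          have : ((n - u).choose (k - u) : ℝ) * (k - u).choose (j - u) =
              (n - u).choose (j - u) * (n - j).choose (k - j) := by exact_mod_cast hchoose
          linear_combination (β ^ (2 * (j - u)) * β ^ (2 * (k - j))) * this
  rw [filter_filter] at hmarkov
  exact le_of_mul_le_mul_right (hmarkov.trans hdouble) hthreshold

-- A non-hereditarily-sparse `F ⊇ S` contains a non-sparse `U`; these are grouped by
-- `W = U ∩ S` and `d = #U - #W`, which is positive since `S` is hereditarily sparse.
theorem card_superset_not_isHereditarilySparse_le_sum {S : Finset V}
    (hS : IsHereditarilySparse k M β S) (m : ℕ) :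
    #{F ∈ univ.powersetCard m | S ⊆ F ∧ ¬IsHereditarilySparse k M β F} ≤
      ∑ W ∈ S.powerset, ∑ d ∈ Icc 1 (m - #S),
        #{U ∈ univ.powersetCard (#W + d) | W ⊆ U ∧ ¬IsSparse k M β U} *
          (Fintype.card V - (#S + d)).choose (m - (#S + d)) := by
  set bad : Finset V → ℕ → Finset (Finset V) :=
    fun W d => {U ∈ univ.powersetCard (#W + d) | U ∩ S = W ∧ ¬IsSparse k M β U}
  have hcover :
      {F ∈ (univ : Finset V).powersetCard m | S ⊆ F ∧ ¬IsHereditarilySparse k M β F} ⊆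
      S.powerset.biUnion fun W => (Icc 1 (m - #S)).biUnion fun d =>
        (bad W d).biUnion fun U => {F ∈ univ.powersetCard m | S ∪ U ⊆ F} := by
    intro F hF
    simp only [mem_filter, mem_powersetCard, subset_univ, true_and] at hF
    obtain ⟨hFm, hSF, hF⟩ := hF
    obtain ⟨U, hUF, hU⟩ : ∃ U ⊆ F, ¬IsSparse k M β U := by
      simpa [IsHereditarilySparse] using hF
    have hinter := card_union_add_card_inter S U
    have hUS : #(U ∩ S) < #U := by
      refine card_lt_card (ssubset_of_subset_of_ne inter_subset_left fun h => hU (hS U ?_))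
      rw [← h]
      exact inter_subset_right
    have hSU : #(S ∪ U) ≤ m := hFm ▸ card_le_card (union_subset hSF hUF)
    rw [inter_comm] at hinter
    simp only [bad, mem_biUnion, mem_powerset, mem_Icc, mem_filter, mem_powersetCard,
      subset_univ, true_and]
    exact ⟨U ∩ S, inter_subset_right, #U - #(U ∩ S), ⟨by omega, by omega⟩, U,
      ⟨by omega, rfl, hU⟩, hFm, union_subset hSF hUF⟩
  refine (card_le_card hcover).trans <| card_biUnion_le.trans <| sum_le_sum fun W _ =>
    card_biUnion_le.trans <| sum_le_sum fun d hd => card_biUnion_le.trans ?_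
  have hdm : #S + d ≤ m := by have := mem_Icc.1 hd; omega
  have hsupersets : ∀ U ∈ bad W d, #{F ∈ univ.powersetCard m | S ∪ U ⊆ F} =
      (Fintype.card V - (#S + d)).choose (m - (#S + d)) := by
    intro U hU
    simp only [bad, mem_filter, mem_powersetCard, subset_univ, true_and] at hU
    have hcard : #(S ∪ U) = #S + d := by
      have := card_union_add_card_inter S U
      rw [inter_comm, hU.2.1] at this
      omega
    rw [card_filter_powersetCard_subset _ _ _ (subset_univ _) (hcard ▸ hdm), hcard,
      card_univ]
  rw [sum_congr rfl hsupersets, sum_const, smul_eq_mul]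
  refine Nat.mul_le_mul_right _ (card_le_card (monotone_filter_right _ fun U _ => ?_))
  exact fun hU => ⟨hU.1 ▸ inter_subset_left, hU.2⟩

theorem card_superset_not_isHereditarilySparse_le (hM : ∀ e ∈ M, #e = k) (hβ0 : 0 < β)
    (hβ1 : β ≤ 1) (hn : 2 * k ^ 2 + k ≤ Fintype.card V) {S : Finset V}
    (hS : IsHereditarilySparse k M β S) {m : ℕ} (hSm : #S ≤ m) (hmk : m ≤ k) :
    (#{F ∈ univ.powersetCard m | S ⊆ F ∧ ¬IsHereditarilySparse k M β F} : ℝ) ≤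
      2 ^ (m + 1) * β ^ 2 * (Fintype.card V - #S).choose (m - #S) := by
  set n := Fintype.card V
  set i := #S
  set N := (n - i).choose (m - i)
  have hterm : ∀ W ⊆ S, ∀ d ∈ Icc 1 (m - i),
      (#{U ∈ univ.powersetCard (#W + d) | W ⊆ U ∧ ¬IsSparse k M β U} : ℝ) *
        (n - (i + d)).choose (m - (i + d)) ≤ 2 * β ^ 2 * ((m - i).choose d * N) := by
    intro W hW d hd
    rw [mem_Icc] at hd
    have hWi : #W ≤ i := card_le_card hW
    have hmarkov := card_superset_not_isSparse_le hM hβ0 (by omega) (hS W hW)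
      (j := #W + d) (by omega) (by omega)
    rw [Nat.add_sub_cancel_left] at hmarkov
    have hratio : ((n - #W).choose d : ℝ) ≤ 2 * (n - i).choose d := by
      have hcd : (i - #W) * d ≤ k ^ 2 := by rw [sq]; exact Nat.mul_le_mul (by omega) (by omega)
      rw [show n - i = n - #W - (i - #W) by omega]
      exact_mod_cast Nat.choose_le_two_mul_choose_sub (by omega)
    have hchoose : ((n - i).choose d : ℝ) * (n - (i + d)).choose (m - (i + d)) =
        N * (m - i).choose d := by
      have := Nat.choose_mul (n := n - i) (k := m - i) (s := d) (by omega)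
      rw [show n - i - d = n - (i + d) by omega, show m - i - d = m - (i + d) by omega] at this
      exact_mod_cast this.symm
    have hpow : β ^ (2 * d) ≤ β ^ 2 := pow_le_pow_of_le_one hβ0.le hβ1 (by omega)
    calc _ ≤ β ^ (2 * d) * (n - #W).choose d * (n - (i + d)).choose (m - (i + d)) := by gcongr
      _ ≤ β ^ 2 * (2 * (n - i).choose d) * (n - (i + d)).choose (m - (i + d)) := by gcongr
      _ = 2 * β ^ 2 * ((m - i).choose d * N) := by linear_combination (2 * β ^ 2) * hchoose
  have hbinomial : ∑ d ∈ Icc 1 (m - i), ((m - i).choose d : ℝ) ≤ 2 ^ (m - i) := by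
    have hsub : Icc 1 (m - i) ⊆ range (m - i + 1) := fun d hd => by
      rw [mem_Icc] at hd; rw [mem_range]; omega
    exact_mod_cast (sum_le_sum_of_subset hsub).trans (Nat.sum_range_choose (m - i)).le
  calc (#{F ∈ univ.powersetCard m | S ⊆ F ∧ ¬IsHereditarilySparse k M β F} : ℝ)
      ≤ ∑ W ∈ S.powerset, ∑ d ∈ Icc 1 (m - i),
          (#{U ∈ univ.powersetCard (#W + d) | W ⊆ U ∧ ¬IsSparse k M β U} : ℝ) *
            (n - (i + d)).choose (m - (i + d)) := by
        exact_mod_cast card_superset_not_isHereditarilySparse_le_sum hS m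
    _ ≤ ∑ W ∈ S.powerset, ∑ d ∈ Icc 1 (m - i), 2 * β ^ 2 * ((m - i).choose d * N) :=
        sum_le_sum fun W hW => sum_le_sum fun d hd => hterm W (mem_powerset.1 hW) d hd
    _ = 2 ^ i * (2 * β ^ 2 * (∑ d ∈ Icc 1 (m - i), ((m - i).choose d : ℝ)) * N) := by
        rw [sum_const, card_powerset, nsmul_eq_mul, ← mul_sum, ← sum_mul]
        push_cast
        ring
    _ ≤ 2 ^ i * (2 * β ^ 2 * 2 ^ (m - i) * N) := by gcongr
    _ = 2 ^ (m + 1) * β ^ 2 * N := by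
        rw [show m + 1 = i + (m - i) + 1 by omega, pow_succ, pow_add]
        ring

theorem degT_filter_isHereditarilySparse_eq_zero {H : Finset (Finset V)}
    (hH : ∀ e ∈ H, #e = k) {S : Finset V} (hSk : #S ≤ k) (hS : ¬IsHereditarilySparse k M β S) :
    degT k {f ∈ H | IsHereditarilySparse k M β f} S = 0 := by
  rw [degT_eq_card_filter_superset (fun e he => hH e (mem_filter.1 he).1) hSk, card_eq_zero,
    filter_eq_empty_iff]
  exact fun f hf hSf => hS ((mem_filter.1 hf).2.mono hSf)

end Sparse

section Cleaning

open scoped Classical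

variable {V : Type*} [Fintype V] [DecidableEq V] {k : ℕ} {H : Finset (Finset V)} {β : ℝ}

theorem two_pow_mul_le_one_of_le {j : ℕ} (hβ0 : 0 ≤ β) (hβ : 2 ^ k * β ≤ 1) (hjk : j ≤ k) :
    2 ^ j * β ≤ 1 :=
  le_trans (by gcongr; exact one_le_two) hβ

theorem two_mul_sq_add_le {n : ℕ} (hβ : 4 * β ≤ 1) (hn : 2 * k ^ 2 ≤ β * n) :
    2 * k ^ 2 + k ≤ n := by
  have hk : (k : ℝ) ≤ k ^ 2 := by exact_mod_cast Nat.le_self_pow two_ne_zero k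
  have : (2 * k ^ 2 + k : ℝ) ≤ n := by nlinarith [Nat.cast_nonneg (α := ℝ) n]
  exact_mod_cast this

theorem le_degT_filter_isHereditarilySparse (hH : ∀ e ∈ H, #e = k) (hβ0 : 0 < β)
    (hβ : 2 ^ (k + 2) * β ≤ 1) (hn : 2 * k ^ 2 ≤ β * Fintype.card V) {S : Finset V}
    (hS : IsHereditarilySparse k (univ.powersetCard k \ H) β S) (hSk : #S < k) :
    (1 - 2 * β) * (Fintype.card V).choose (k - #S) ≤
      degT k {f ∈ H | IsHereditarilySparse k (univ.powersetCard k \ H) β f} S := by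
  set M := univ.powersetCard k \ H
  set n := Fintype.card V
  set i := #S
  set N := (n - i).choose (k - i)
  have hM : ∀ e ∈ M, #e = k := fun e he => (mem_powersetCard.1 (mem_sdiff.1 he).1).2
  have h2k : 2 ^ (k + 1) * β ≤ 1 / 2 := by rw [pow_succ] at hβ; linarith
  have h4 : 2 ^ 2 * β ≤ 1 := two_pow_mul_le_one_of_le hβ0.le hβ (by omega)
  have hkk : (i : ℝ) * ((k - i : ℕ) : ℝ) ≤ k ^ 2 := by
    have : i * (k - i) ≤ k ^ 2 := by rw [sq]; exact Nat.mul_le_mul (by omega) (by omega)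
    exact_mod_cast this
  have hn' : 2 * k ^ 2 + k ≤ n := two_mul_sq_add_le (by linarith) hn
  have hcover : N ≤ #{f ∈ M | S ⊆ f} + degT k {f ∈ H | IsHereditarilySparse k M β f} S +
      #{F ∈ univ.powersetCard k | S ⊆ F ∧ ¬IsHereditarilySparse k M β F} := by
    have hsupersets : #{f ∈ univ.powersetCard k | S ⊆ f} = N := by
      rw [card_filter_powersetCard_subset S univ k (subset_univ S) hSk.le, card_univ]
    rw [← hsupersets,
      degT_eq_card_filter_superset (fun e he => hH e (mem_filter.1 he).1) hSk.le]
    refine (card_le_card fun f hf => ?_).trans ((card_union_le _ _).trans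
      (Nat.add_le_add_right (card_union_le _ _) _))
    obtain ⟨hfk, hSf⟩ := mem_filter.1 hf
    by_cases hfH : f ∈ H
    · by_cases hfS : IsHereditarilySparse k M β f
      · exact mem_union_left _ (mem_union_right _ (mem_filter.2 ⟨mem_filter.2 ⟨hfH, hfS⟩, hSf⟩))
      · exact mem_union_right _ (mem_filter.2 ⟨hfk, hSf, hfS⟩)
    · exact mem_union_left _ (mem_union_left _ (mem_filter.2 ⟨mem_sdiff.2 ⟨hfk, hfH⟩, hSf⟩))
  have hmissing : (#{f ∈ M | S ⊆ f} : ℝ) ≤ β ^ 2 * N :=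
    (hS S subset_rfl).trans (mul_le_mul_of_nonneg_right
      (pow_le_pow_of_le_one hβ0.le (by linarith) (by omega)) (Nat.cast_nonneg _))
  have hbad := card_superset_not_isHereditarilySparse_le hM hβ0 (by linarith) hn' hS hSk.le le_rfl
  have hratio : (1 - β / 2) * n.choose (k - i) ≤ N :=
    one_sub_mul_choose_le_choose_sub (by omega) (by linarith)
  have hB : (0 : ℝ) ≤ n.choose (k - i) := Nat.cast_nonneg _
  have hN : (0 : ℝ) ≤ N := Nat.cast_nonneg _
  calc (1 - 2 * β) * n.choose (k - i)
        ≤ (1 - 3 * β / 4) * ((1 - β / 2) * n.choose (k - i)) := by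
        nlinarith [mul_nonneg hB (sq_nonneg β), mul_nonneg hB hβ0.le]
    _ ≤ (1 - 3 * β / 4) * N := mul_le_mul_of_nonneg_left hratio (by linarith)
    _ ≤ N - β ^ 2 * N - 2 ^ (k + 1) * β ^ 2 * N := by
        nlinarith [mul_le_mul_of_nonneg_right h2k (mul_nonneg hβ0.le hN),
          mul_le_mul_of_nonneg_right h4 (mul_nonneg hβ0.le hN)]
    _ ≤ degT k {f ∈ H | IsHereditarilySparse k M β f} S := by
        have : (N : ℝ) ≤ #{f ∈ M | S ⊆ f} + degT k {f ∈ H | IsHereditarilySparse k M β f} S +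
            #{F ∈ univ.powersetCard k | S ⊆ F ∧ ¬IsHereditarilySparse k M β F} := by
          exact_mod_cast hcover
        linarith

theorem isDense_filter_isHereditarilySparse (hH : ∀ e ∈ H, #e = k) (hβ0 : 0 < β)
    (hβ : 2 ^ (k + 2) * β ≤ 1) (hn : 2 * k ^ 2 ≤ β * Fintype.card V)
    (hHcard : (1 - β ^ (2 * k)) * (Fintype.card V).choose k ≤ #H) :
    IsDense k {f ∈ H | IsHereditarilySparse k (univ.powersetCard k \ H) β f}
      (1 - 2 * β) (2 * β) := by
  set M := univ.powersetCard k \ H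
  set n := Fintype.card V
  have hM : ∀ e ∈ M, #e = k := fun e he => (mem_powersetCard.1 (mem_sdiff.1 he).1).2
  have hempty : IsHereditarilySparse k M β ∅ := by
    intro U hU
    rw [subset_empty.1 hU, IsSparse, filter_true_of_mem fun f _ => empty_subset f]
    simp only [card_empty, Nat.sub_zero]
    have hHk : H ⊆ univ.powersetCard k := fun e he => mem_powersetCard.2 ⟨subset_univ e, hH e he⟩
    have hMcard : (#M : ℝ) = n.choose k - #H := by
      rw [card_sdiff_of_subset hHk, card_powersetCard, card_univ,
        Nat.cast_sub (by simpa using card_le_card hHk)]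
    linarith
  intro i hi hik
  have hlow : ∀ S : Finset V, #S = i →
      (degT k {f ∈ H | IsHereditarilySparse k M β f} S : ℝ) < (1 - 2 * β) * n.choose (k - i) →
      ¬IsHereditarilySparse k M β S := fun S hS hlt hSp =>
    (le_degT_filter_isHereditarilySparse hH hβ0 hβ hn hSp (by omega)).not_gt (hS ▸ hlt)
  refine ⟨?_, fun S hS hlt =>
    degT_filter_isHereditarilySparse_eq_zero hH (by omega) (hlow S hS hlt)⟩
  have hsub : {S : Finset V | #S = i ∧
      (degT k {f ∈ H | IsHereditarilySparse k M β f} S : ℝ) < (1 - 2 * β) * n.choose (k - i)} ⊆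
      ({S ∈ univ.powersetCard i | ∅ ⊆ S ∧ ¬IsHereditarilySparse k M β S} : Finset (Finset V)) :=
    fun S hS => by
      simp only [coe_filter, mem_powersetCard, subset_univ, true_and, empty_subset]
      exact ⟨hS.1, hlow S hS.1 hS.2⟩
  have h2i : 2 ^ i * β ≤ 1 := two_pow_mul_le_one_of_le hβ0.le hβ (by omega)
  have h4 : 2 ^ 2 * β ≤ 1 := two_pow_mul_le_one_of_le hβ0.le hβ (by omega)
  calc (_ : ℝ) ≤ #{S ∈ univ.powersetCard i | ∅ ⊆ S ∧ ¬IsHereditarilySparse k M β S} := by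
        exact_mod_cast
          (Set.ncard_le_ncard hsub (finite_toSet _)).trans_eq (Set.ncard_coe_finset _)
    _ ≤ 2 ^ (i + 1) * β ^ 2 * (n - #(∅ : Finset V)).choose (i - #(∅ : Finset V)) :=
        card_superset_not_isHereditarilySparse_le hM hβ0 (by linarith)
          (two_mul_sq_add_le (by linarith) hn) hempty (by simp) (by omega)
    _ ≤ 2 * β * n.choose i := by
        rw [card_empty, Nat.sub_zero, Nat.sub_zero, pow_succ]
        have : (0 : ℝ) ≤ β * n.choose i := by positivity
        nlinarith

end Cleaning

/-- For every `k ≥ 2` there is `α₀ > 0` such that for all `0 < α ≤ α₀` there is `n₀` such that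
for all `n ≥ n₀`: every `k`-graph `H` on `n` vertices with `|H| ≥ (1-α) C(n,k)` has a spanning
subgraph that is `(1 - 2α^(1/(4k²)), 2α^(1/(4k²)))`-dense. -/
theorem stmt5 (k : ℕ) (hk : 2 ≤ k) :
    ∃ α₀ : ℝ, 0 < α₀ ∧ ∀ α : ℝ, 0 < α → α ≤ α₀ →
      ∃ n₀ : ℕ, ∀ n : ℕ, n₀ ≤ n →
        ∀ H : Finset (Finset (Fin n)), (∀ e ∈ H, e.card = k) →
          (1 - α) * (n.choose k : ℝ) ≤ (H.card : ℝ) →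
          ∃ H' ⊆ H, IsDense k H' (1 - 2 * α ^ ((1 : ℝ) / (4 * (k : ℝ) ^ 2)))
            (2 * α ^ ((1 : ℝ) / (4 * (k : ℝ) ^ 2))) := by
  classical
  have hm : 4 * k ^ 2 ≠ 0 := by positivity
  have hexp : (1 : ℝ) / (4 * (k : ℝ) ^ 2) = ((4 * k ^ 2 : ℕ) : ℝ)⁻¹ := by push_cast; ring
  refine ⟨((2 : ℝ) ^ (k + 2))⁻¹ ^ (4 * k ^ 2), by positivity, fun α hα hαα₀ => ?_⟩
  rw [hexp]
  have hβ : 2 ^ (k + 2) * α ^ ((4 * k ^ 2 : ℕ) : ℝ)⁻¹ ≤ 1 := by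
    rw [← le_inv_mul_iff₀ (by positivity), mul_one,
      Real.rpow_inv_le_iff_of_pos hα.le (by positivity) (by positivity), Real.rpow_natCast]
    exact hαα₀
  set β := α ^ ((4 * k ^ 2 : ℕ) : ℝ)⁻¹
  have hβ0 : 0 < β := by positivity
  have hαβ : β ^ (4 * k ^ 2) = α := Real.rpow_inv_natCast_pow hα.le hm
  refine ⟨⌈2 * k ^ 2 / β⌉₊, fun n hn H hH hHcard => ⟨_, filter_subset _ _,
    isDense_filter_isHereditarilySparse hH hβ0 hβ ?_ ?_⟩⟩
  · have := (Nat.le_ceil (2 * k ^ 2 / β)).trans (Nat.cast_le.2 hn)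
    rw [div_le_iff₀ hβ0] at this
    rw [Fintype.card_fin]
    linarith
  · rw [Fintype.card_fin]
    refine le_trans ?_ (hαβ ▸ hHcard)
    have hβ1 : β ≤ 1 := by simpa using two_pow_mul_le_one_of_le (j := 0) hβ0.le hβ (by omega)
    have hpow : β ^ (4 * k ^ 2) ≤ β ^ (2 * k) := pow_le_pow_of_le_one hβ0.le hβ1 (by nlinarith)
    exact mul_le_mul_of_nonneg_right (by linarith) (Nat.cast_nonneg _)
end

section
/- Let k ≥ 3 and let P be a k-uniform tight path. If X and Y partition V(P) and every edge e of P satisfies |e ∩ Y| ≥ 2, then 2(|X| − (k−1)) ≤ (k−2)·|Y|. -/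
open Finset

/-!
Cut the first `k * ⌊m / k⌋` vertices of the path into `⌊m / k⌋` disjoint edges. Each contains
two vertices of `Y`, so `k * |Y| ≥ 2 k ⌊m / k⌋ ≥ 2 (m - (k - 1))`, and `m = |X| + |Y|`.
-/

theorem Finset.mul_le_card_inter_range_of_blocks {S : Finset ℕ} {k c q : ℕ}
    (h : ∀ j < q, c ≤ #(S ∩ Ico (j * k) (j * k + k))) :
    c * q ≤ #(S ∩ range (q * k)) := by
  induction q with
  | zero => simp
  | succ q ih =>
    have hsplit : range ((q + 1) * k) = range (q * k) ∪ Ico (q * k) (q * k + k) := by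
      rw [range_eq_Ico, range_eq_Ico, Ico_union_Ico_eq_Ico (Nat.zero_le _) (by omega),
        Nat.succ_mul]
    have hdisj : Disjoint (S ∩ range (q * k)) (S ∩ Ico (q * k) (q * k + k)) :=
      (range_eq_Ico (q * k) ▸ Ico_disjoint_Ico_consecutive 0 _ _).mono inter_subset_right
        inter_subset_right
    rw [hsplit, inter_union_distrib_left, card_union_of_disjoint hdisj, Nat.mul_succ]
    exact Nat.add_le_add (ih fun j hj => h j (by omega)) (h q (by omega))

theorem Finset.mul_div_le_card_of_windows {S : Finset ℕ} {k c m : ℕ}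
    (h : ∀ i, i + k ≤ m → c ≤ #(S ∩ Ico i (i + k))) :
    c * (m / k) ≤ #S := by
  refine (mul_le_card_inter_range_of_blocks fun j hj => h _ ?_).trans
    (card_le_card inter_subset_left)
  calc j * k + k = (j + 1) * k := (Nat.succ_mul j k).symm
    _ ≤ m / k * k := Nat.mul_le_mul_right k hj
    _ ≤ m := Nat.div_mul_le_self m k

theorem stmt6_general (k : ℕ) (n m : ℕ) (f : ℕ → Fin n)
    (hinj : ∀ i j, i < m → j < m → f i = f j → i = j)
    (X Y : Finset (Fin n))
    (hdisj : Disjoint X Y)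
    (hpart : X ∪ Y = (Finset.range m).image f)
    (hedge : ∀ i, i + k ≤ m → 2 ≤ ((((Finset.Ico i (i + k)).image f)) ∩ Y).card) :
    2 * ((X.card : ℤ) - ((k : ℤ) - 1)) ≤ ((k : ℤ) - 2) * (Y.card : ℤ) := by
  have hinjOn : Set.InjOn f (range m : Set ℕ) := fun i hi j hj =>
    hinj i j (mem_range.1 hi) (mem_range.1 hj)
  have hcard : #X + #Y = m := by
    rw [← card_union_of_disjoint hdisj, hpart, card_image_of_injOn hinjOn, card_range]
  have hk : 0 < k := Nat.pos_of_ne_zero fun hk => by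
    subst hk; simpa using hedge 0 (Nat.zero_le m)
  set T := (range m).filter (fun i => f i ∈ Y)
  have hT : #T ≤ #Y := card_le_card_of_injOn f (fun i hi => (mem_filter.1 hi).2)
    (hinjOn.mono (filter_subset _ _))
  have hwindow : ∀ i, i + k ≤ m → 2 ≤ #(T ∩ Ico i (i + k)) := by
    intro i hi
    have hsub : (Ico i (i + k)).image f ∩ Y ⊆ (T ∩ Ico i (i + k)).image f := by
      simp only [subset_iff, mem_inter, mem_image, mem_filter, mem_range, mem_Ico, T]
      rintro _ ⟨⟨j, hj, rfl⟩, hjY⟩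
      exact ⟨j, ⟨⟨by omega, hjY⟩, hj⟩, rfl⟩
    exact (hedge i hi).trans ((card_le_card hsub).trans card_image_le)
  have hblocks : 2 * (m / k) ≤ #Y := (mul_div_le_card_of_windows hwindow).trans hT
  have hbound : 2 * (m + 1) ≤ k * #Y + 2 * k :=
    calc 2 * (m + 1) ≤ 2 * (k * (m / k) + k) :=
          Nat.mul_le_mul_left 2 (Nat.lt_mul_div_self_add hk)
      _ = k * (2 * (m / k)) + 2 * k := by ring
      _ ≤ k * #Y + 2 * k := by gcongr
  zify at hcard hbound
  linarith

/-- Let `k ≥ 3` and let `P` be a `k`-uniform tight path, given by a linear ordering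
`f 0, f 1, …, f (m-1)` of its vertex set (with edges exactly the sets of `k` consecutive
vertices). If `X` and `Y` partition `V(P)` and every edge `e` of `P` satisfies `|e ∩ Y| ≥ 2`,
then `2(|X| - (k-1)) ≤ (k-2)|Y|`. -/
theorem stmt6 (k : ℕ) (hk : 3 ≤ k) (n m : ℕ) (f : ℕ → Fin n)
    (hinj : ∀ i j, i < m → j < m → f i = f j → i = j)
    (X Y : Finset (Fin n))
    (hdisj : Disjoint X Y)
    (hpart : X ∪ Y = (Finset.range m).image f)
    (hedge : ∀ i, i + k ≤ m → 2 ≤ ((((Finset.Ico i (i + k)).image f)) ∩ Y).card) :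
    2 * ((X.card : ℤ) - ((k : ℤ) - 1)) ≤ ((k : ℤ) - 2) * (Y.card : ℤ) :=
  stmt6_general k n m f hinj X Y hdisj hpart hedge
end

section
/- Let 0 < β ≤ 1/6, let n be a positive integer, and let F be a 2-edge-coloured graph with |V(F)| ≤ n and minimum degree δ(F) ≥ (1−β)n. Then there exists S ⊆ V(F) with |S| ≥ (1−β)n such that the induced subgraph F[S] has minimum degree at least (1−2β)n and there is a colour c ∈ {red, blue} such that the subgraph of colour-c edges of F[S] is connected and every vertex of S is incident to a colour-c edge inside S. -/
/-!
Let `x` be any vertex and `c` its majority colour, so the colour-`c` component `C` of `x` has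
more than `δ(F)/2 ≥ (1-β)n/2` vertices. If `|C| ≥ (1-β)n`, take `S = C`: a vertex loses at most
`|V \ C| ≤ βn` neighbours when passing to `F[C]`. Otherwise every edge leaving `C` has the other
colour, every vertex of `C` has a neighbour outside `C` (its degree exceeds `|C|`), and, because
`C` is still large, any two vertices outside `C` have a common neighbour in `C`; so the other
colour connects all of `V(F)`, and we take `S = V(F)`.

Since `(1-β)n ≤ δ(F) < |V(F)| ≤ n` forces `βn ≥ 1`, hence `n ≥ 6` and `|S| ≥ 5`, every vertex
of the connected colour class on `S` has an incident edge of that colour.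
-/

open Finset Relation

namespace Relation

variable {α : Type*} {r : α → α → Prop}

theorem ReflTransGen.restrict_of_closed {s : Set α} (hs : ∀ a b, a ∈ s → r a b → b ∈ s)
    {a b : α} (ha : a ∈ s) (h : ReflTransGen r a b) :
    ReflTransGen (fun x y => x ∈ s ∧ y ∈ s ∧ r x y) a b := by
  suffices b ∈ s ∧ ReflTransGen (fun x y => x ∈ s ∧ y ∈ s ∧ r x y) a b from this.2
  induction h with
  | refl => exact ⟨ha, .refl⟩
  | tail _ hbc ih => exact ⟨hs _ _ ih.1 hbc, ih.2.tail ⟨ih.1, hs _ _ ih.1 hbc, hbc⟩⟩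

theorem exists_rel_of_forall_reflTransGen {s : Set α} (hs : s.Nontrivial)
    (h : ∀ a ∈ s, ∀ b ∈ s, ReflTransGen r a b) {a : α} (ha : a ∈ s) : ∃ b, r a b := by
  obtain ⟨b, hb, hba⟩ := hs.exists_ne a
  rcases (h a ha b hb).cases_head with rfl | ⟨c, hac, -⟩
  · exact absurd rfl hba
  · exact ⟨c, hac⟩

theorem reflTransGen_of_forall_exists_common [Std.Symm r] (s : Set α)
    (hs : ∀ a ∈ s, ∃ b ∉ s, r a b) (hsc : ∀ a ∉ s, ∀ b ∉ s, ∃ c ∈ s, r a c ∧ r c b)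
    (a b : α) : ReflTransGen r a b := by
  have reach_compl : ∀ a, ∃ d ∉ s, ReflTransGen r a d := by
    intro a
    by_cases ha : a ∈ s
    · obtain ⟨d, hd, had⟩ := hs a ha
      exact ⟨d, hd, .single had⟩
    · exact ⟨a, ha, .refl⟩
  obtain ⟨d, hd, had⟩ := reach_compl a
  obtain ⟨e, he, hbe⟩ := reach_compl b
  obtain ⟨c, -, hdc, hce⟩ := hsc d hd e he
  exact had.trans ((ReflTransGen.single hdc).tail hce) |>.trans (Std.Symm.symm _ _ hbe)

variable [Fintype α]

open Classical in
noncomputable def reachFinset (r : α → α → Prop) (x : α) : Finset α :=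
  {y | ReflTransGen r x y}

@[simp]
theorem mem_reachFinset {x y : α} : y ∈ reachFinset r x ↔ ReflTransGen r x y := by
  classical
  simp [reachFinset]

theorem mem_reachFinset_of_rel {x a b : α} (ha : a ∈ reachFinset r x) (hab : r a b) :
    b ∈ reachFinset r x :=
  mem_reachFinset.2 ((mem_reachFinset.1 ha).tail hab)

theorem reflTransGen_restrict_reachFinset [Std.Symm r] {x a b : α}
    (ha : a ∈ reachFinset r x) (hb : b ∈ reachFinset r x) :
    ReflTransGen (fun u v => u ∈ reachFinset r x ∧ v ∈ reachFinset r x ∧ r u v) a b :=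
  ReflTransGen.restrict_of_closed (s := reachFinset r x)
    (fun _ _ hu huv => mem_reachFinset_of_rel hu huv) ha
    ((Std.Symm.symm _ _ (mem_reachFinset.1 ha)).trans (mem_reachFinset.1 hb))

end Relation

theorem Finset.exists_card_le_two_mul_card_filter_eq {α : Type*} (s : Finset α) (f : α → Bool) :
    ∃ c, #s ≤ 2 * #{x ∈ s | f x = c} := by
  have h := card_filter_add_card_filter_not (s := s) (p := fun x => f x = true)
  simp only [Bool.not_eq_true] at h
  rcases le_total #{x ∈ s | f x = false} #{x ∈ s | f x = true} with h' | h'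
  · exact ⟨true, by omega⟩
  · exact ⟨false, by omega⟩

namespace SimpleGraph

variable {V : Type*} [Fintype V] [DecidableEq V] (G : SimpleGraph V) [DecidableRel G.Adj]

theorem degree_add_card_le (v : V) (s : Finset V) :
    G.degree v + #s ≤ #(G.neighborFinset v ∩ s) + Fintype.card V := by
  rw [← card_neighborFinset_eq_degree, ← card_inter_add_card_union]
  exact Nat.add_le_add_left (card_le_univ _) _

theorem exists_adj_mem_of_card_lt {v : V} {s : Finset V}
    (h : Fintype.card V < G.degree v + #s) : ∃ u ∈ s, G.Adj v u := by
  have hpos : 0 < #(G.neighborFinset v ∩ s) := by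
    have := G.degree_add_card_le v s
    omega
  obtain ⟨u, hu⟩ := card_pos.1 hpos
  rw [mem_inter, mem_neighborFinset] at hu
  exact ⟨u, hu.2, hu.1⟩

theorem exists_common_adj_mem {v w : V} {s : Finset V}
    (h : 2 * Fintype.card V < G.degree v + G.degree w + #s) :
    ∃ u ∈ s, G.Adj v u ∧ G.Adj w u := by
  have := G.degree_add_card_le w s
  obtain ⟨u, hu, hvu⟩ := G.exists_adj_mem_of_card_lt (v := v) (s := G.neighborFinset w ∩ s)
    (by omega)
  rw [mem_inter, mem_neighborFinset] at hu
  exact ⟨u, hu.2, hvu, hu.1⟩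

theorem le_card_neighborFinset_inter_of_le_card {β : ℝ} {n : ℕ} (hV : Fintype.card V ≤ n)
    (hdeg : ∀ v, (1 - β) * n ≤ (G.degree v : ℝ)) {s : Finset V} (hs : (1 - β) * n ≤ (#s : ℝ))
    (v : V) : (1 - 2 * β) * n ≤ (#(G.neighborFinset v ∩ s) : ℝ) := by
  have h : (G.degree v + #s : ℝ) ≤ #(G.neighborFinset v ∩ s) + Fintype.card V := by
    exact_mod_cast G.degree_add_card_le v s
  have hV' : (Fintype.card V : ℝ) ≤ n := by exact_mod_cast hV
  linarith [hdeg v]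

end SimpleGraph

section Colouring

variable {V : Type*} (F : SimpleGraph V) (col : V → V → Bool)

def colourAdj (c : Bool) (a b : V) : Prop := F.Adj a b ∧ col a b = c

variable {F col}

theorem colourAdj_symm (hsym : ∀ u v, col u v = col v u) (c : Bool) :
    Std.Symm (colourAdj F col c) :=
  ⟨fun a b h => ⟨h.1.symm, hsym a b ▸ h.2⟩⟩

variable [Fintype V] [DecidableEq V] [DecidableRel F.Adj]

theorem card_filter_add_one_le_card_reachFinset (c : Bool) (x : V) :
    #{y ∈ F.neighborFinset x | col x y = c} + 1 ≤ #(reachFinset (colourAdj F col c) x) := by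
  rw [← card_insert_of_notMem (a := x) (by simp)]
  refine card_le_card (insert_subset (mem_reachFinset.2 .refl) fun y hy => ?_)
  rw [mem_filter, SimpleGraph.mem_neighborFinset] at hy
  exact mem_reachFinset.2 (.single hy)

theorem reflTransGen_colourAdj_not_of_card_lt (hsym : ∀ u v, col u v = col v u)
    {β : ℝ} (hβ : β ≤ 1 / 5) {n : ℕ} (hV : Fintype.card V ≤ n)
    (hdeg : ∀ v, (1 - β) * n ≤ (F.degree v : ℝ)) {c : Bool} {C : Finset V}
    (hC : ∀ a ∈ C, ∀ b, colourAdj F col c a b → b ∈ C)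
    (hlo : (1 - β) * n < 2 * (#C : ℝ)) (hhi : (#C : ℝ) < (1 - β) * n) (u v : V) :
    ReflTransGen (colourAdj F col !c) u v := by
  have := colourAdj_symm (F := F) hsym (!c)
  have hcross : ∀ a ∈ C, ∀ b ∉ C, F.Adj a b → colourAdj F col (!c) a b := fun a ha b hb hab =>
    ⟨hab, Bool.eq_not_iff.2 fun h => hb (hC a ha b ⟨hab, h⟩)⟩
  have hV' : (Fintype.card V : ℝ) ≤ n := by exact_mod_cast hV
  refine reflTransGen_of_forall_exists_common (C : Set V) (fun a ha => ?_) (fun a ha b hb => ?_) u v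
  · have hcard : (#Cᶜ : ℝ) + #C = Fintype.card V := by exact_mod_cast card_compl_add_card C
    obtain ⟨b, hb, hab⟩ := F.exists_adj_mem_of_card_lt (v := a) (s := Cᶜ)
      (by exact_mod_cast (by linarith [hdeg a] : (Fintype.card V : ℝ) < F.degree a + #Cᶜ))
    exact ⟨b, mem_compl.1 hb, hcross a ha b (mem_compl.1 hb) hab⟩
  · have hn : (0 : ℝ) ≤ n := n.cast_nonneg
    obtain ⟨w, hw, haw, hbw⟩ := F.exists_common_adj_mem (v := a) (w := b) (s := C)
      (by exact_mod_cast (by nlinarith [hdeg a, hdeg b] :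
        2 * (Fintype.card V : ℝ) < F.degree a + F.degree b + #C))
    exact ⟨w, hw, Std.Symm.symm _ _ (hcross w hw a ha haw.symm),
      hcross w hw b hb hbw.symm⟩

theorem exists_large_reflTransGen_colourAdj (hsym : ∀ u v, col u v = col v u)
    {β : ℝ} (hβ : β ≤ 1 / 5) {n : ℕ} (hV : Fintype.card V ≤ n)
    (hdeg : ∀ v, (1 - β) * n ≤ (F.degree v : ℝ)) (x : V) :
    ∃ (S : Finset V) (c : Bool), (1 - β) * n ≤ (#S : ℝ) ∧
      ∀ u ∈ S, ∀ v ∈ S, ReflTransGen (fun a b => a ∈ S ∧ b ∈ S ∧ colourAdj F col c a b) u v := by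
  obtain ⟨c, hc⟩ := (F.neighborFinset x).exists_card_le_two_mul_card_filter_eq (col x)
  set C := reachFinset (colourAdj F col c) x
  have hClo : (1 - β) * n < 2 * (#C : ℝ) := by
    rw [F.card_neighborFinset_eq_degree] at hc
    have hA : _ ≤ #C := card_filter_add_one_le_card_reachFinset c x
    have : (F.degree x : ℝ) < 2 * #C := by exact_mod_cast (by omega : F.degree x < 2 * #C)
    linarith [hdeg x]
  by_cases hlarge : (1 - β) * n ≤ (#C : ℝ)
  · have := colourAdj_symm (F := F) hsym c
    exact ⟨C, c, hlarge, fun u hu v hv => reflTransGen_restrict_reachFinset hu hv⟩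
  · have hN : (1 - β) * n ≤ (Fintype.card V : ℝ) :=
      (hdeg x).trans (by exact_mod_cast (F.degree_lt_card_verts x).le)
    refine ⟨univ, !c, by simpa using hN, fun u _ v _ => ?_⟩
    exact ReflTransGen.mono (fun a b h => ⟨mem_univ a, mem_univ b, h⟩) u v
      (reflTransGen_colourAdj_not_of_card_lt hsym hβ hV hdeg
        (fun a ha b hab => mem_reachFinset_of_rel ha hab) hClo (not_le.1 hlarge) u v)

end Colouring

theorem stmt10_general {V : Type} [Fintype V] [DecidableEq V]
    (β : ℝ) (hβ : β ≤ 1 / 6) (n : ℕ)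
    (F : SimpleGraph V) [DecidableRel F.Adj]
    (col : V → V → Bool) (hsym : ∀ u v, col u v = col v u)
    (hV : Fintype.card V ≤ n)
    (hδ : (1 - β) * n ≤ (F.minDegree : ℝ)) :
    ∃ (S : Finset V) (c : Bool),
      (1 - β) * n ≤ (S.card : ℝ) ∧
      (∀ v ∈ S, (1 - 2 * β) * n ≤ (((F.neighborFinset v) ∩ S).card : ℝ)) ∧
      (∀ u ∈ S, ∀ v ∈ S,
        Relation.ReflTransGen (fun a b => a ∈ S ∧ b ∈ S ∧ F.Adj a b ∧ col a b = c) u v) ∧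
      (∀ v ∈ S, ∃ u ∈ S, F.Adj v u ∧ col v u = c) := by
  rcases isEmpty_or_nonempty V with hempty | ⟨⟨x⟩⟩
  · refine ⟨∅, true, ?_, by simp, by simp, by simp⟩
    simpa [SimpleGraph.minDegree_of_subsingleton] using hδ
  have hdeg : ∀ v, (1 - β) * n ≤ (F.degree v : ℝ) :=
    fun v => hδ.trans (by exact_mod_cast F.minDegree_le_degree v)
  have hβn : 1 ≤ β * n := by
    have : F.degree x + 1 ≤ n := (F.degree_lt_card_verts x).trans_le hV
    have : (F.degree x : ℝ) + 1 ≤ n := by exact_mod_cast this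
    linarith [hdeg x]
  obtain ⟨S, c, hS, hconn⟩ :=
    exists_large_reflTransGen_colourAdj hsym (by linarith) hV hdeg x
  have hS1 : 1 < #S := by
    have : (1 : ℝ) < #S := by nlinarith
    exact_mod_cast this
  refine ⟨S, c, hS, fun v _ => F.le_card_neighborFinset_inter_of_le_card hV hdeg hS v, hconn,
    fun v hv => ?_⟩
  obtain ⟨u, -, hu, hvu⟩ := exists_rel_of_forall_reflTransGen (one_lt_card_iff_nontrivial.1 hS1)
    hconn hv
  exact ⟨u, hu, hvu⟩

/-- Let `0 < β ≤ 1/6`, `n ≥ 1`, and let `F` be a 2-edge-coloured graph (`col` gives the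
colour of each edge, `true` = red) with `|V(F)| ≤ n` and minimum degree `δ(F) ≥ (1-β)n`.
Then there is `S ⊆ V(F)` with `|S| ≥ (1-β)n` such that the induced subgraph `F[S]` has
minimum degree at least `(1-2β)n` and for some colour `c` the subgraph of colour-`c` edges of
`F[S]` is connected and every vertex of `S` is incident to a colour-`c` edge inside `S`. -/
theorem stmt10 {V : Type} [Fintype V] [DecidableEq V]
    (β : ℝ) (hβ0 : 0 < β) (hβ : β ≤ 1 / 6) (n : ℕ) (hn : 0 < n)
    (F : SimpleGraph V) [DecidableRel F.Adj]
    (col : V → V → Bool) (hsym : ∀ u v, col u v = col v u)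
    (hV : Fintype.card V ≤ n)
    (hδ : (1 - β) * n ≤ (F.minDegree : ℝ)) :
    ∃ (S : Finset V) (c : Bool),
      (1 - β) * n ≤ (S.card : ℝ) ∧
      (∀ v ∈ S, (1 - 2 * β) * n ≤ (((F.neighborFinset v) ∩ S).card : ℝ)) ∧
      (∀ u ∈ S, ∀ v ∈ S,
        Relation.ReflTransGen (fun a b => a ∈ S ∧ b ∈ S ∧ F.Adj a b ∧ col a b = c) u v) ∧
      (∀ v ∈ S, ∃ u ∈ S, F.Adj v u ∧ col v u = c) :=
  stmt10_general β hβ n F col hsym hV hδ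
end

section
/- For every ε with 0 < ε ≤ 1/324 there exists n_0 such that for every n ≥ n_0 the following holds: if F is a 2-edge-coloured graph with |V(F)| ≤ n and at least (1−ε)·binom(n,2) edges, then there exists S ⊆ V(F) with |S| ≥ (1−3√ε)n such that the induced subgraph F[S] has minimum degree at least (1−6√ε)n and there is a colour c ∈ {red, blue} such that the subgraph of colour-c edges of F[S] is connected and every vertex of S is incident to a colour-c edge inside S. -/
/-!
Let `σ = √ε`. Few edges are missing, so the vertices missing at most `σ n` edges form a set `S₀`
of size at least `(1 - 2σ) n` in which every vertex has at least `(1 - 4σ) n` neighbours. If one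
red component of `F[S₀]` covers all but `σ n` vertices of `S₀`, it is the required set. Otherwise
some union `A` of red components has `σ n ≤ |A| ≤ |S₀| / 2`. All edges between `A` and `S₀ \ A`
are blue, any two vertices of `A` have a common neighbour outside `A`, and at most `σ n` vertices
of `S₀` have no neighbour in `A`; removing those leaves a blue-connected set.
-/

open Finset Relation SimpleGraph

section RelComponent

variable {α : Type*} (S : Finset α) (r : α → α → Prop)

def restrictRel : α → α → Prop := fun a b => a ∈ S ∧ b ∈ S ∧ r a b

open Classical in
noncomputable def relComponent (x : α) : Finset α := {y ∈ S | ReflTransGen (restrictRel S r) x y}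

-- For symmetric `r`, these are exactly the unions of `r`-components of `S`.
def IsRelClosed (A : Finset α) : Prop := A ⊆ S ∧ ∀ a ∈ A, ∀ b ∈ S, r a b → b ∈ A

instance [Std.Symm r] : Std.Symm (restrictRel S r) :=
  ⟨fun _ _ ⟨ha, hb, hab⟩ => ⟨hb, ha, symm_of r hab⟩⟩

variable {S r}

theorem mem_relComponent {x y : α} :
    y ∈ relComponent S r x ↔ y ∈ S ∧ ReflTransGen (restrictRel S r) x y := by
  simp [relComponent]

theorem mem_relComponent_self {x : α} (hx : x ∈ S) : x ∈ relComponent S r x :=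
  mem_relComponent.2 ⟨hx, .refl⟩

theorem isRelClosed_self : IsRelClosed S r S :=
  ⟨Subset.rfl, fun _ _ _ hb _ => hb⟩

theorem isRelClosed_relComponent (x : α) : IsRelClosed S r (relComponent S r x) := by
  refine ⟨fun y hy => (mem_relComponent.1 hy).1, fun a ha b hb hab => ?_⟩
  obtain ⟨haS, hxa⟩ := mem_relComponent.1 ha
  exact mem_relComponent.2 ⟨hb, hxa.tail ⟨haS, hb, hab⟩⟩

theorem IsRelClosed.sdiff [DecidableEq α] [Std.Symm r] {A B : Finset α}
    (hA : IsRelClosed S r A) (hB : IsRelClosed S r B) : IsRelClosed S r (A \ B) := by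
  refine ⟨sdiff_subset.trans hA.1, fun a ha b hb hab => ?_⟩
  rw [mem_sdiff] at ha ⊢
  exact ⟨hA.2 a ha.1 b hb hab, fun hbB => ha.2 (hB.2 b hbB a (hA.1 ha.1) (symm_of r hab))⟩

theorem IsRelClosed.relComponent_subset {U : Finset α} (hU : IsRelClosed S r U) {x : α}
    (hx : x ∈ U) : relComponent S r x ⊆ U := by
  intro y hy
  obtain ⟨-, hxy⟩ := mem_relComponent.1 hy
  clear hy
  induction hxy with
  | refl => exact hx
  | tail _ hbc ih => exact hU.2 _ ih _ hbc.2.1 hbc.2.2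

theorem disjoint_relComponent [Std.Symm r] {x y : α} (hy : y ∈ S)
    (hxy : y ∉ relComponent S r x) : Disjoint (relComponent S r x) (relComponent S r y) :=
  disjoint_left.2 fun _ hzx hzy => hxy <| mem_relComponent.2
    ⟨hy, (mem_relComponent.1 hzx).2.trans (symm (mem_relComponent.1 hzy).2)⟩

theorem reflTransGen_restrictRel_relComponent [Std.Symm r] {x u v : α}
    (hu : u ∈ relComponent S r x) (hv : v ∈ relComponent S r x) :
    ReflTransGen (restrictRel (relComponent S r x) r) u v := by
  have from_x : ∀ y, ReflTransGen (restrictRel S r) x y →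
      ReflTransGen (restrictRel (relComponent S r x) r) x y := by
    intro y hxy
    induction hxy with
    | refl => exact .refl
    | tail hxb hbc ih =>
      exact ih.tail ⟨mem_relComponent.2 ⟨hbc.1, hxb⟩,
        mem_relComponent.2 ⟨hbc.2.1, hxb.tail hbc⟩, hbc.2.2⟩
  exact (symm (from_x u (mem_relComponent.1 hu).2)).trans (from_x v (mem_relComponent.1 hv).2)

theorem exists_isRelClosed_of_card_relComponent_lt [DecidableEq α] [Std.Symm r] {t : ℝ}
    (ht : 4 * t ≤ #S) (hsmall : ∀ x ∈ S, (#(relComponent S r x) : ℝ) + t < #S) :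
    ∃ A, IsRelClosed S r A ∧ t ≤ #A ∧ (#A : ℝ) ≤ #S / 2 := by
  classical
  obtain ⟨U, hU, hUmin⟩ := exists_min_image
    (S.powerset.filter fun U => IsRelClosed S r U ∧ t ≤ #U) (fun U => #U)
    ⟨S, mem_filter.2 ⟨mem_powerset_self S, isRelClosed_self, by
      have : (0 : ℝ) ≤ #S := by positivity
      linarith⟩⟩
  obtain ⟨hUclosed, htU⟩ := (mem_filter.1 hU).2
  by_cases hhalf : (#U : ℝ) ≤ #S / 2
  · exact ⟨U, hUclosed, htU, hhalf⟩
  push Not at hhalf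
  -- by minimality of `U`, removing a component from it leaves fewer than `t` points
  have hcomp : ∀ x ∈ U, (#U : ℝ) < #(relComponent S r x) + t := by
    intro x hx
    have hsub := hUclosed.relComponent_subset hx
    by_contra! hle
    have hcard : (#(U \ relComponent S r x) : ℝ) = #U - #(relComponent S r x) :=
      cast_card_sdiff hsub
    have hmem : U \ relComponent S r x ∈ S.powerset.filter
        fun U => IsRelClosed S r U ∧ t ≤ #U :=
      mem_filter.2 ⟨mem_powerset.2 (sdiff_subset.trans hUclosed.1),
        hUclosed.sdiff (isRelClosed_relComponent x), by rw [hcard]; linarith⟩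
    have hlt : #(U \ relComponent S r x) < #U :=
      card_lt_card (sdiff_ssubset hsub ⟨x, mem_relComponent_self (hUclosed.1 hx)⟩)
    exact absurd (hUmin _ hmem) (not_le.2 hlt)
  obtain ⟨x, hx⟩ : U.Nonempty := by
    rw [← card_pos]; exact_mod_cast (by positivity : (0 : ℝ) ≤ #S / 2).trans_lt hhalf
  by_cases hUx : U ⊆ relComponent S r x
  · have hle : (#U : ℝ) ≤ #(relComponent S r x) := by exact_mod_cast card_le_card hUx
    have := hsmall x (hUclosed.1 hx)
    refine ⟨S \ U, isRelClosed_self.sdiff hUclosed, ?_, ?_⟩ <;>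
    · rw [cast_card_sdiff hUclosed.1]; linarith
  · obtain ⟨y, hy, hyx⟩ := not_subset.1 hUx
    have hsum : (#(relComponent S r x) : ℝ) + #(relComponent S r y) ≤ #U := by
      rw [← Nat.cast_add, ← card_union_of_disjoint (disjoint_relComponent (hUclosed.1 hy) hyx)]
      exact_mod_cast card_le_card
        (union_subset (hUclosed.relComponent_subset hx) (hUclosed.relComponent_subset hy))
    linarith [hcomp x hx, hcomp y hy]

theorem exists_rel_of_forall_reflTransGen (hS : 1 < #S)
    (hconn : ∀ u ∈ S, ∀ v ∈ S, ReflTransGen (restrictRel S r) u v) :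
    ∀ v ∈ S, ∃ u ∈ S, r v u := by
  classical
  intro v hv
  obtain ⟨w, hw, hwv⟩ := exists_mem_ne hS v
  rcases (hconn v hv w hw).cases_head with rfl | ⟨u, ⟨-, hu, hvu⟩, -⟩
  · exact absurd rfl hwv
  · exact ⟨u, hu, hvu⟩

end RelComponent

theorem Finset.card_inter_le_card_inter_add_card_sdiff {α : Type*} [DecidableEq α]
    (s t u : Finset α) : #(s ∩ t) ≤ #(s ∩ u) + #(t \ u) :=
  calc #(s ∩ t) ≤ #(s ∩ u ∪ t \ u) := card_le_card fun x => by
        simp only [mem_inter, mem_union, mem_sdiff]; tauto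
    _ ≤ _ := card_union_le _ _

namespace SimpleGraph

section Degree

variable {V : Type*} [Fintype V] [DecidableEq V] (G : SimpleGraph V) [DecidableRel G.Adj]

theorem degree_add_degree_compl_add_one (v : V) :
    G.degree v + Gᶜ.degree v + 1 = Fintype.card V := by
  have := G.degree_lt_card_verts v
  rw [degree_compl]
  omega

theorem sum_degree_compl_add_two_mul_card_edgeFinset :
    ∑ v, (Gᶜ.degree v : ℝ) + 2 * #G.edgeFinset = Fintype.card V * (Fintype.card V - 1) := by
  have hsum : ∑ v, ((G.degree v : ℝ) + Gᶜ.degree v + 1) = Fintype.card V * Fintype.card V := by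
    simp_rw [← Nat.cast_add, ← Nat.cast_add_one, degree_add_degree_compl_add_one]
    simp
  rw [sum_add_distrib, sum_add_distrib, ← Nat.cast_sum, sum_degrees_eq_twice_card_edges] at hsum
  push_cast at hsum
  simp only [sum_const, card_univ, nsmul_eq_mul, mul_one] at hsum
  linarith

variable {G}

omit [DecidableEq V] in
theorem card_le_of_le_degree {T : Finset V} {t : ℝ} (ht : 0 < t)
    (hsum : ∑ v, (G.degree v : ℝ) ≤ t ^ 2) (hT : ∀ v ∈ T, t ≤ G.degree v) : (#T : ℝ) ≤ t := by
  have : #T * t ≤ t * t := calc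
    #T * t ≤ ∑ v ∈ T, (G.degree v : ℝ) := by simpa using card_nsmul_le_sum T _ t hT
    _ ≤ ∑ v, (G.degree v : ℝ) :=
      sum_le_sum_of_subset_of_nonneg (subset_univ T) fun _ _ _ => Nat.cast_nonneg _
    _ ≤ t * t := by rwa [← sq]
  exact le_of_mul_le_mul_right this ht

end Degree

theorem symm_adj_and_colour_eq {V : Type*} {F : SimpleGraph V} {col : V → V → Bool}
    (hcol : ∀ u v, col u v = col v u) (c : Bool) : Std.Symm fun a b => F.Adj a b ∧ col a b = c :=
  ⟨fun a b h => ⟨h.1.symm, hcol b a ▸ h.2⟩⟩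

section Dense

variable {V : Type*} [Fintype V] [DecidableEq V] {F : SimpleGraph V} [DecidableRel F.Adj]

theorem sum_degree_compl_le_of_card_edgeFinset {ε : ℝ} {n : ℕ} (hε : 0 ≤ ε)
    (hV : Fintype.card V ≤ n) (hE : (1 - ε) * (n.choose 2 : ℝ) ≤ #F.edgeFinset) :
    ∑ v, (Fᶜ.degree v : ℝ) ≤ ε * n ^ 2 := by
  have hsum := F.sum_degree_compl_add_two_mul_card_edgeFinset
  have hchoose : ((Fintype.card V).choose 2 : ℝ) ≤ n.choose 2 := by
    exact_mod_cast Nat.choose_le_choose 2 hV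
  simp only [Nat.cast_choose_two] at hE hchoose
  nlinarith [mul_nonneg hε (Nat.cast_nonneg (α := ℝ) n)]

omit [DecidableEq V] in
theorem le_card_of_card_edgeFinset {σ : ℝ} {n : ℕ} (hσ0 : 0 ≤ σ) (hσ1 : σ ≤ 1)
    (hn : 1 < (1 - σ) * n)
    (hE : (1 - σ ^ 2) * (n.choose 2 : ℝ) ≤ #F.edgeFinset) : (1 - σ) * n ≤ Fintype.card V := by
  have hE' : (#F.edgeFinset : ℝ) ≤ (Fintype.card V).choose 2 := by
    exact_mod_cast F.card_edgeFinset_le_card_choose_two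
  rw [Nat.cast_choose_two] at hE hE'
  by_contra! hm
  have hm0 : (0 : ℝ) ≤ Fintype.card V := Nat.cast_nonneg _
  nlinarith [mul_nonneg (mul_nonneg hσ0 (sub_nonneg.2 hσ1)) (Nat.cast_nonneg (α := ℝ) n)]

variable {σ n : ℝ}

theorem exists_large_subset_le_card_neighborFinset_inter (hσn : 1 ≤ σ * n)
    (hm : (1 - σ) * n ≤ Fintype.card V) (hF : ∑ v, (Fᶜ.degree v : ℝ) ≤ (σ * n) ^ 2) :
    ∃ S₀ : Finset V, (1 - 2 * σ) * n ≤ #S₀ ∧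
      ∀ v ∈ S₀, (1 - 4 * σ) * n ≤ #(F.neighborFinset v ∩ S₀) := by
  classical
  set S₀ := univ.filter fun v => (Fᶜ.degree v : ℝ) ≤ σ * n
  have hout : (#(univ \ S₀) : ℝ) ≤ σ * n := card_le_of_le_degree (by linarith) hF fun v hv => by
    simp only [S₀, mem_sdiff, mem_filter, mem_univ, true_and] at hv
    linarith
  have hS₀ : (#(univ \ S₀) : ℝ) = Fintype.card V - #S₀ := by
    rw [cast_card_sdiff (subset_univ _), card_univ]
  refine ⟨S₀, by linarith, fun v hv => ?_⟩
  have hv' : (Fᶜ.degree v : ℝ) ≤ σ * n := (mem_filter.1 hv).2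
  have hdeg : (F.degree v : ℝ) + Fᶜ.degree v + 1 = Fintype.card V := by
    exact_mod_cast F.degree_add_degree_compl_add_one v
  have hinter : (F.degree v : ℝ) ≤ #(F.neighborFinset v ∩ S₀) + #(univ \ S₀) := by
    have := card_inter_le_card_inter_add_card_sdiff (F.neighborFinset v) univ S₀
    rw [inter_univ, card_neighborFinset_eq_degree] at this
    exact_mod_cast this
  linarith

theorem exists_common_neighbor_mem_sdiff {S₀ A : Finset V} (hAS₀ : A ⊆ S₀)
    (hA : (#A : ℝ) ≤ #S₀ / 2) (hS₀ : (#S₀ : ℝ) ≤ n) (hσ : σ < 1 / 16) (hn : 0 < n)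
    (hdeg : ∀ v ∈ S₀, (1 - 4 * σ) * n ≤ #(F.neighborFinset v ∩ S₀))
    {a a' : V} (ha : a ∈ A) (ha' : a' ∈ A) : ∃ b ∈ S₀ \ A, F.Adj a b ∧ F.Adj a' b := by
  have hout : ∀ v ∈ A, (1 - 4 * σ) * n - #A ≤ #(F.neighborFinset v ∩ (S₀ \ A)) := by
    intro v hv
    have hsplit : (#(F.neighborFinset v ∩ S₀) : ℝ) ≤ #(F.neighborFinset v ∩ (S₀ \ A)) + #A := by
      have := card_inter_le_card_inter_add_card_sdiff (F.neighborFinset v) S₀ (S₀ \ A)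
      rw [Finset.sdiff_sdiff_eq_self hAS₀] at this
      exact_mod_cast this
    linarith [hdeg v (hAS₀ hv)]
  have hlt : (#(S₀ \ A) : ℝ) <
      #(F.neighborFinset a ∩ (S₀ \ A)) + #(F.neighborFinset a' ∩ (S₀ \ A)) := by
    rw [cast_card_sdiff hAS₀]
    nlinarith [hout a ha, hout a' ha', mul_pos (sub_pos.2 hσ) hn]
  obtain ⟨b, hb⟩ := inter_nonempty_of_card_lt_card_add_card inter_subset_right inter_subset_right
    (by exact_mod_cast hlt)
  simp only [mem_inter, mem_neighborFinset] at hb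
  exact ⟨b, hb.1.2, hb.1.1, hb.2.1⟩

/-- A vertex with no neighbour in `A` misses at least `#A ≥ σ n` edges, so there are at most
`σ n` of them; the others are `c`-connected through `A`, since any two vertices of `A` have a
common neighbour outside `A`. -/
theorem exists_connected_of_forall_crossing_colour {col : V → V → Bool}
    (hcol : ∀ u v, col u v = col v u) {c : Bool} {S₀ A : Finset V} (hAS₀ : A ⊆ S₀)
    (hcross : ∀ a ∈ A, ∀ b ∈ S₀ \ A, F.Adj a b → col a b = c) (hσA : σ * n ≤ #A)
    (hA : (#A : ℝ) ≤ #S₀ / 2) (hS₀ : (#S₀ : ℝ) ≤ n) (hσ0 : 0 < σ) (hσ : σ < 1 / 16) (hn : 0 < n)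
    (hF : ∑ v, (Fᶜ.degree v : ℝ) ≤ (σ * n) ^ 2)
    (hdeg : ∀ v ∈ S₀, (1 - 4 * σ) * n ≤ #(F.neighborFinset v ∩ S₀)) :
    ∃ S ⊆ S₀, (#S₀ : ℝ) ≤ #S + σ * n ∧ ∀ u ∈ S, ∀ v ∈ S,
      ReflTransGen (restrictRel S fun a b => F.Adj a b ∧ col a b = c) u v := by
  classical
  have := symm_adj_and_colour_eq (F := F) hcol c
  set T := (S₀ \ A).filter fun b => ∀ a ∈ A, ¬F.Adj a b
  have hT : (#T : ℝ) ≤ σ * n := card_le_of_le_degree (by positivity) hF fun b hb => by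
    obtain ⟨hb, hbA⟩ := mem_filter.1 hb
    refine hσA.trans (Nat.cast_le.2 (card_le_card fun a ha => ?_))
    rw [mem_neighborFinset, compl_adj]
    exact ⟨fun h => (mem_sdiff.1 hb).2 (h ▸ ha), fun h => hbA a ha h.symm⟩
  have hTS₀ : T ⊆ S₀ := filter_subset _ _ |>.trans sdiff_subset
  have hmem : ∀ v, v ∈ S₀ \ T ↔ v ∈ S₀ ∧ (v ∈ A ∨ ∃ a ∈ A, F.Adj a v) := by
    intro v
    simp only [T, mem_sdiff, mem_filter, not_and, not_forall, not_not]
    tauto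
  set Q := restrictRel (S₀ \ T) fun a b => F.Adj a b ∧ col a b = c
  have hQ : ∀ a ∈ A, ∀ b ∈ S₀ \ A, F.Adj a b → Q a b := fun a ha b hb hab =>
    ⟨(hmem a).2 ⟨hAS₀ ha, .inl ha⟩, (hmem b).2 ⟨(mem_sdiff.1 hb).1, .inr ⟨a, ha, hab⟩⟩, hab,
      hcross a ha b hb hab⟩
  have hA_conn : ∀ a ∈ A, ∀ a' ∈ A, ReflTransGen Q a a' := fun a ha a' ha' => by
    obtain ⟨b, hb, hab, ha'b⟩ := exists_common_neighbor_mem_sdiff hAS₀ hA hS₀ hσ hn hdeg ha ha'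
    exact (ReflTransGen.single (hQ a ha b hb hab)).tail (symm_of Q (hQ a' ha' b hb ha'b))
  have hto_A : ∀ v ∈ S₀ \ T, ∃ a ∈ A, ReflTransGen Q v a := fun v hv => by
    obtain ⟨hvS₀, hvA | ⟨a, ha, hav⟩⟩ := (hmem v).1 hv
    · exact ⟨v, hvA, .refl⟩
    · by_cases hvA : v ∈ A
      · exact ⟨v, hvA, .refl⟩
      · exact ⟨a, ha, .single (symm_of Q (hQ a ha v (mem_sdiff.2 ⟨hvS₀, hvA⟩) hav))⟩
  refine ⟨S₀ \ T, sdiff_subset, by rw [cast_card_sdiff hTS₀]; linarith, fun u hu v hv => ?_⟩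
  obtain ⟨a, ha, hua⟩ := hto_A u hu
  obtain ⟨a', ha', hva⟩ := hto_A v hv
  exact hua.trans ((hA_conn a ha a' ha').trans (symm_of _ hva))

/-- Either one red component covers all but `σ n` vertices of `S₀`, or some union of red
components is balanced and all edges leaving it are blue. -/
theorem exists_monochromatic_connected_subset {col : V → V → Bool}
    (hcol : ∀ u v, col u v = col v u) {S₀ : Finset V} (hS₀ : (1 - 2 * σ) * n ≤ #S₀)
    (hS₀n : (#S₀ : ℝ) ≤ n) (hσ0 : 0 < σ) (hσ : σ < 1 / 16) (hn : 0 < n)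
    (hF : ∑ v, (Fᶜ.degree v : ℝ) ≤ (σ * n) ^ 2)
    (hdeg : ∀ v ∈ S₀, (1 - 4 * σ) * n ≤ #(F.neighborFinset v ∩ S₀)) :
    ∃ S ⊆ S₀, ∃ c, (#S₀ : ℝ) ≤ #S + σ * n ∧ ∀ u ∈ S, ∀ v ∈ S,
      ReflTransGen (restrictRel S fun a b => F.Adj a b ∧ col a b = c) u v := by
  have := symm_adj_and_colour_eq (F := F) hcol true
  set red := fun a b => F.Adj a b ∧ col a b = true
  by_cases hbig : ∃ x ∈ S₀, (#S₀ : ℝ) ≤ #(relComponent S₀ red x) + σ * n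
  · obtain ⟨x, -, hx⟩ := hbig
    exact ⟨_, (isRelClosed_relComponent x).1, true, hx,
      fun u hu v hv => reflTransGen_restrictRel_relComponent hu hv⟩
  push Not at hbig
  obtain ⟨A, hA, hσA, hA2⟩ := exists_isRelClosed_of_card_relComponent_lt
    (by nlinarith [mul_pos hσ0 hn]) hbig
  have hcross : ∀ a ∈ A, ∀ b ∈ S₀ \ A, F.Adj a b → col a b = false := fun a ha b hb hab => by
    rw [mem_sdiff] at hb
    simpa using fun h => hb.2 (hA.2 a ha b hb.1 ⟨hab, h⟩)
  obtain ⟨S, hSS₀, hS, hconn⟩ := exists_connected_of_forall_crossing_colour hcol hA.1 hcross hσA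
    hA2 hS₀n hσ0 hσ hn hF hdeg
  exact ⟨S, hSS₀, false, hS, hconn⟩

end Dense

end SimpleGraph

/-- For every `0 < ε ≤ 1/324` there is `n₀` such that for all `n ≥ n₀`: every 2-edge-coloured
graph `F` (`col` gives the colour of each edge, `true` = red) with `|V(F)| ≤ n` and at least
`(1-ε) C(n,2)` edges has a set `S ⊆ V(F)` with `|S| ≥ (1-3√ε)n` such that `F[S]` has minimum
degree at least `(1-6√ε)n` and for some colour `c` the subgraph of colour-`c` edges of `F[S]`
is connected and every vertex of `S` is incident to a colour-`c` edge inside `S`. -/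
theorem stmt12 (ε : ℝ) (hε0 : 0 < ε) (hε : ε ≤ 1 / 324) :
    ∃ n₀ : ℕ, ∀ n : ℕ, n₀ ≤ n →
      ∀ (V : Type) [Fintype V] [DecidableEq V] (F : SimpleGraph V) [DecidableRel F.Adj]
        (col : V → V → Bool), (∀ u v, col u v = col v u) →
        Fintype.card V ≤ n →
        (1 - ε) * (n.choose 2 : ℝ) ≤ (F.edgeFinset.card : ℝ) →
        ∃ (S : Finset V) (c : Bool),
          (1 - 3 * Real.sqrt ε) * n ≤ (S.card : ℝ) ∧
          (∀ v ∈ S, (1 - 6 * Real.sqrt ε) * n ≤ (((F.neighborFinset v) ∩ S).card : ℝ)) ∧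
          (∀ u ∈ S, ∀ v ∈ S,
            Relation.ReflTransGen (fun a b => a ∈ S ∧ b ∈ S ∧ F.Adj a b ∧ col a b = c) u v) ∧
          (∀ v ∈ S, ∃ u ∈ S, F.Adj v u ∧ col v u = c) := by
  set σ := √ε
  have hσ0 : 0 < σ := Real.sqrt_pos.2 hε0
  have hσ : σ ≤ 1 / 18 := by
    rw [show (1 / 18 : ℝ) = √(1 / 324) by rw [eq_comm, Real.sqrt_eq_iff_mul_self_eq] <;> norm_num]
    exact Real.sqrt_le_sqrt hε
  have hσε : σ ^ 2 = ε := Real.sq_sqrt hε0.le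
  refine ⟨⌈σ⁻¹⌉₊, fun n hn V _ _ F _ col hcol hV hE => ?_⟩
  have hσn : 1 ≤ σ * n := by
    rw [← inv_mul_le_iff₀ hσ0, mul_one]
    exact (Nat.le_ceil _).trans (by exact_mod_cast hn)
  have hn18 : (18 : ℝ) ≤ n := by nlinarith
  have hF : ∑ v, (Fᶜ.degree v : ℝ) ≤ (σ * n) ^ 2 := by
    rw [mul_pow, hσε]; exact sum_degree_compl_le_of_card_edgeFinset hε0.le hV hE
  have hm := le_card_of_card_edgeFinset hσ0.le (by linarith) (by nlinarith) (hσε ▸ hE)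
  obtain ⟨S₀, hS₀, hdeg₀⟩ := exists_large_subset_le_card_neighborFinset_inter hσn hm hF
  have hS₀n : (#S₀ : ℝ) ≤ n := (Nat.cast_le.2 (card_le_univ S₀)).trans (by exact_mod_cast hV)
  obtain ⟨S, hSS₀, c, hS, hconn⟩ := exists_monochromatic_connected_subset hcol hS₀ hS₀n hσ0
    (by linarith) (by linarith) hF hdeg₀
  have hS_card : (1 - 3 * σ) * n ≤ #S := by linarith
  refine ⟨S, c, hS_card, fun v hv => ?_, hconn,
    exists_rel_of_forall_reflTransGen (by exact_mod_cast (by nlinarith : (1 : ℝ) < #S)) hconn⟩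
  have hinter : (#(F.neighborFinset v ∩ S₀) : ℝ) ≤ #(F.neighborFinset v ∩ S) + (#S₀ - #S) := by
    rw [← cast_card_sdiff hSS₀]
    exact_mod_cast card_inter_le_card_inter_add_card_sdiff (F.neighborFinset v) S₀ S
  linarith [hdeg₀ v (hSS₀ hv)]
end

section
/- Let k ≥ 3. There exists ε_1 > 0 such that for every 0 < ε ≤ ε_1 there exists n_0 such that for all n ≥ n_0 and every δ > 5√ε the following holds. Let H be a 2-edge-coloured k-graph on n vertices and let G be a 3√ε-blueprint for H. Let T be a (k−3)-element subset of V(H), and let S^blue ⊆ N_G^blue(T) and S^red ⊆ N_G^red(T) be sets with |S^blue| ≥ δn and |S^red| ≥ δn. Then there exists a vertex y ∈ S^blue such that the set Γ^red_y = {x ∈ S^red : T∪{x,y} ∈ ∂R(T∪{x}) ∩ ∂B(T∪{y})} has size at least (δ − 6√ε)n. Moreover, if δ ≥ ε^{1/9}, then |Γ^red_y| ≥ (1 − ε^{1/4})·|S^red|. -/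
/-! For `x ∈ Sred`, (BP1) applied to `T ∪ {x}` says that all but `3√ε n` vertices `y` complete
`T ∪ {x, y}` to a set of `∂R(T ∪ {x})`, and symmetrically for blue edges. Counting the red
failures over `Sred × Sblue` and taking `y ∈ Sblue` with fewest of them leaves at most
`3√ε n |Sred| / |Sblue| ≤ (3√ε / δ) |Sred|` red failures at `y`, besides at most `3√ε n` blue
ones; everything else in `Sred` lies in `Γ_y`. The second bound follows because
`6√ε / δ ≤ ε^{1/4}` once `δ ≥ ε^{1/9}` and `ε ≤ 6^{-36}`. -/

open Finset

theorem degT_eq_card_filter_insert {V : Type*} [Fintype V] [DecidableEq V] {m : ℕ}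
    (S : Finset (Finset V)) {e : Finset V} (h : m - #e = 1) :
    degT m S e = #{y | insert y e ∈ S} := by
  simp only [degT, degOn, h, powersetCard_one, filter_map, Function.Embedding.coeFn_mk,
    Function.comp_def, singleton_union, card_map]
  congr 1

theorem card_filter_not_le_of_le_card_filter {V : Type*} [Fintype V] (P : V → Prop)
    [DecidablePred P] (S : Finset V) {c : ℝ}
    (h : (1 - c) * Fintype.card V ≤ #{y | P y}) :
    (#(S.filter fun y => ¬ P y) : ℝ) ≤ c * Fintype.card V := by
  have hsub : (#(S.filter fun y => ¬ P y) : ℝ) ≤ #{y | ¬ P y} := by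
    exact_mod_cast card_le_card (filter_subset_filter _ (subset_univ S))
  have hsplit : (#{y | P y} : ℝ) + #{y | ¬ P y} = Fintype.card V := by
    exact_mod_cast (card_filter_add_card_filter_not _).trans card_univ
  linarith

theorem Blueprint.card_filter_insert_notMem_shadow_le {k : ℕ} {V : Type*} [Fintype V]
    [DecidableEq V] {H : Finset (Finset V)} {cH : Finset V → Bool} {ε : ℝ}
    (G : Blueprint k H cH ε) (hk : 2 ≤ k) {e : Finset V} (he : e ∈ G.edges) (S : Finset V) :
    (#(S.filter fun y => insert y e ∉ shadowTo (k - 1) (G.comp e)) : ℝ)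
      ≤ ε * Fintype.card V := by
  have hdeg := G.comp_deg e he
  rw [degT_eq_card_filter_insert _ (by rw [G.edges_card e he]; omega)] at hdeg
  exact card_filter_not_le_of_le_card_filter _ S hdeg

theorem exists_mem_card_mul_card_filter_not_le {α β : Type*} (A : α → β → Prop)
    [∀ x y, Decidable (A x y)] {s : Finset α} {t : Finset β} (ht : t.Nonempty) {b : ℝ}
    (hA : ∀ x ∈ s, (#(t.filter fun y => ¬ A x y) : ℝ) ≤ b) :
    ∃ y ∈ t, (#t : ℝ) * #(s.filter fun x => ¬ A x y) ≤ #s * b := by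
  obtain ⟨y, hy, hmin⟩ := exists_min_image t (fun y => #(s.filter fun x => ¬ A x y)) ht
  refine ⟨y, hy, ?_⟩
  simpa only [nsmul_eq_mul] using card_nsmul_le_card_nsmul' (R := ℝ) (fun x y => ¬ A x y)
    (fun y' hy' => (Nat.cast_le.2 (hmin y' hy'))) hA

theorem exists_mem_card_mul_le_card_filter_and {α β : Type*} [DecidableEq α]
    (A B : α → β → Prop) [∀ x y, Decidable (A x y)] [∀ x y, Decidable (B x y)]
    {s : Finset α} {t : Finset β}
    (ht : t.Nonempty) {b : ℝ}
    (hA : ∀ x ∈ s, (#(t.filter fun y => ¬ A x y) : ℝ) ≤ b)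
    (hB : ∀ y ∈ t, (#(s.filter fun x => ¬ B x y) : ℝ) ≤ b) :
    ∃ y ∈ t, (#t : ℝ) * (#s - b) ≤ #t * #(s.filter fun x => A x y ∧ B x y) + #s * b := by
  obtain ⟨y, hy, hbadA⟩ := exists_mem_card_mul_card_filter_not_le A ht hA
  refine ⟨y, hy, ?_⟩
  have hcover : s ⊆ s.filter (fun x => A x y ∧ B x y) ∪ s.filter (fun x => ¬ A x y)
      ∪ s.filter (fun x => ¬ B x y) := by
    intro x hx
    simp only [mem_union, mem_filter, hx, true_and]
    tauto
  have hcard : (#s : ℝ) ≤ #(s.filter fun x => A x y ∧ B x y) + #(s.filter fun x => ¬ A x y)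
      + #(s.filter fun x => ¬ B x y) := by
    exact_mod_cast (card_le_card hcover).trans
      ((card_union_le _ _).trans (Nat.add_le_add_right (card_union_le _ _) _))
  have ht0 : (0 : ℝ) ≤ #t := Nat.cast_nonneg _
  nlinarith [mul_le_mul_of_nonneg_left hcard ht0, mul_le_mul_of_nonneg_left (hB y hy) ht0]

theorem lower_bounds_of_mul_sub_le {N δ s R T Γ : ℝ} (hs : 0 < s) (hδ : 3 * s ≤ δ)
    (hN : 0 < N) (hT : δ * N ≤ T) (hR : δ * N ≤ R)
    (h : T * (R - 3 * s * N) ≤ T * Γ + R * (3 * s * N)) :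
    (δ - 6 * s) * N ≤ Γ ∧ (1 - 6 * s / δ) * R ≤ Γ := by
  have hδ0 : 0 < δ := by linarith
  have hT0 : 0 < T := lt_of_lt_of_le (by positivity) hT
  have hR0 : 0 < R := lt_of_lt_of_le (by positivity) hR
  have hloss : δ * (R - Γ) ≤ 3 * s * (δ * N + R) := by
    refine le_of_mul_le_mul_left ?_ hT0
    nlinarith [mul_le_mul_of_nonneg_right hT (by positivity : 0 ≤ 3 * s * R)]
  constructor
  · refine le_of_mul_le_mul_left ?_ hδ0
    nlinarith [mul_le_mul_of_nonneg_left hR (by linarith : 0 ≤ δ - 3 * s)]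
  · rw [sub_mul, one_mul, div_mul_eq_mul_div, sub_le_iff_le_add, ← sub_le_iff_le_add',
      le_div_iff₀ hδ0]
    nlinarith

theorem six_mul_sqrt_le_rpow_mul_rpow {ε : ℝ} (h0 : 0 ≤ ε) (h : ε ≤ (1 / 6) ^ 36) :
    6 * √ε ≤ ε ^ ((1 : ℝ) / 9) * ε ^ ((1 : ℝ) / 4) := by
  set u := ε ^ ((1 : ℝ) / 36)
  have hu0 : 0 ≤ u := Real.rpow_nonneg h0 _
  have hpow (m : ℕ) : ε ^ ((m : ℝ) / 36) = u ^ m := by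
    rw [← Real.rpow_natCast, ← Real.rpow_mul h0]; ring_nf
  have hu : u ≤ 1 / 6 := by
    refine (pow_le_pow_iff_left₀ hu0 (by norm_num) (by norm_num : 36 ≠ 0)).1 ?_
    rw [← hpow]; simpa using h
  have hu5 : 6 * u ^ 5 ≤ 1 := by
    have := pow_le_pow_left₀ hu0 hu 5
    norm_num at this; linarith
  rw [Real.sqrt_eq_rpow, show (1 : ℝ) / 2 = (18 : ℕ) / 36 by norm_num,
    show (1 : ℝ) / 9 = (4 : ℕ) / 36 by norm_num, show (1 : ℝ) / 4 = (9 : ℕ) / 36 by norm_num,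
    hpow, hpow, hpow]
  calc 6 * u ^ 18 = u ^ 13 * (6 * u ^ 5) := by ring
    _ ≤ u ^ 13 * 1 := by gcongr
    _ = u ^ 4 * u ^ 9 := by ring

/-- Lemma 5.5 of the paper: for `k ≥ 3`, suitable small `ε > 0`, large `n` and any
`δ > 5√ε`, if `H` is a 2-edge-coloured `k`-graph on `n` vertices, `G` is a `3√ε`-blueprint
for `H`, `T` is a `(k-3)`-set of vertices, and `Sblue ⊆ N_G^blue(T)`, `Sred ⊆ N_G^red(T)`
have size at least `δn`, then there is `y ∈ Sblue` such that
`Γ = {x ∈ Sred : T ∪ {x,y} ∈ ∂R(T∪{x}) ∩ ∂B(T∪{y})}` has size at least `(δ - 6√ε)n`;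
moreover if `δ ≥ ε^{1/9}` then `|Γ| ≥ (1 - ε^{1/4})|Sred|`. -/
theorem stmt14 (k : ℕ) (hk : 3 ≤ k) :
    ∃ ε₁ : ℝ, 0 < ε₁ ∧ ∀ ε : ℝ, 0 < ε → ε ≤ ε₁ →
      ∃ n₀ : ℕ, ∀ n : ℕ, n₀ ≤ n → ∀ δ : ℝ, 5 * Real.sqrt ε < δ →
        ∀ (H : Finset (Finset (Fin n))) (cH : Finset (Fin n) → Bool),
          (∀ e ∈ H, e.card = k) →
          ∀ G : Blueprint k H cH (3 * Real.sqrt ε),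
            ∀ T : Finset (Fin n), T.card = k - 3 →
              ∀ Sblue Sred : Finset (Fin n),
                (∀ x ∈ Sblue, x ∉ T ∧ insert x T ∈ G.edges ∧ G.col (insert x T) = false) →
                (∀ x ∈ Sred, x ∉ T ∧ insert x T ∈ G.edges ∧ G.col (insert x T) = true) →
                δ * n ≤ (Sblue.card : ℝ) → δ * n ≤ (Sred.card : ℝ) →
                ∃ y ∈ Sblue,
                  (δ - 6 * Real.sqrt ε) * n ≤
                    ((Sred.filter (fun x =>
                      insert x (insert y T) ∈ shadowTo (k - 1) (G.comp (insert x T)) ∧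
                      insert x (insert y T) ∈ shadowTo (k - 1) (G.comp (insert y T)))).card : ℝ) ∧
                  (ε ^ ((1 : ℝ) / 9) ≤ δ →
                    (1 - ε ^ ((1 : ℝ) / 4)) * (Sred.card : ℝ) ≤
                      ((Sred.filter (fun x =>
                        insert x (insert y T) ∈ shadowTo (k - 1) (G.comp (insert x T)) ∧
                        insert x (insert y T) ∈ shadowTo (k - 1) (G.comp (insert y T)))).card : ℝ)) := by
  refine ⟨(1 / 6) ^ 36, by positivity, fun ε hε hε₁ => ⟨1, fun n hn δ hδ H cH _ G T _ Sblue Sred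
    hSblue hSred hδblue hδred => ?_⟩⟩
  have hN : (Fintype.card (Fin n) : ℝ) = n := by rw [Fintype.card_fin]
  have hn0 : (0 : ℝ) < n := by exact_mod_cast hn
  have hδ0 : 0 < δ := lt_of_le_of_lt (by positivity) hδ
  have hbad {e} (he : e ∈ G.edges) (S : Finset (Fin n)) :=
    G.card_filter_insert_notMem_shadow_le (by omega) he S
  have hRed (x) (hx : x ∈ Sred) : (#(Sblue.filter fun y =>
      ¬ insert x (insert y T) ∈ shadowTo (k - 1) (G.comp (insert x T))) : ℝ) ≤ 3 * √ε * n := by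
    simpa only [insert_comm x, hN] using hbad (hSred x hx).2.1 Sblue
  have hBlue (y) (hy : y ∈ Sblue) : (#(Sred.filter fun x =>
      ¬ insert x (insert y T) ∈ shadowTo (k - 1) (G.comp (insert y T))) : ℝ) ≤ 3 * √ε * n := by
    simpa only [hN] using hbad (hSblue y hy).2.1 Sred
  have hSblue_ne : Sblue.Nonempty :=
    card_pos.1 (by exact_mod_cast (by positivity : 0 < δ * n).trans_le hδblue)
  obtain ⟨y, hy, hcount⟩ := exists_mem_card_mul_le_card_filter_and _ _ hSblue_ne hRed hBlue
  obtain ⟨hbound, hratio⟩ := lower_bounds_of_mul_sub_le (Real.sqrt_pos.2 hε) (by linarith) hn0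
    hδblue hδred hcount
  refine ⟨y, hy, hbound, fun hδε => le_trans ?_ hratio⟩
  have hroot := (six_mul_sqrt_le_rpow_mul_rpow hε.le hε₁).trans
    (mul_le_mul_of_nonneg_right hδε (Real.rpow_nonneg hε.le _))
  gcongr
  rw [div_le_iff₀ hδ0]
  linarith
end
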